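/- arXiv:2202.02287 — 5 statements merged into one kernel-verified Lean document; each statement's English description precedes it below -/
import Mathlib

section
/- Let f ∈ C_c^∞(R^2) with ∫ f dx = 0 and let (f_ε) be an admissible discretisation of f with constant C_f. Then there is a constant C depending only on C_f such that for all ε ∈ (0,1) and all p ∈ [−π/ε, π/ε]^2 with p ≠ 0: |f̂_ε(εp)| ≤ C |p|^{−2}, where f̂_ε(q) = Σ_{x∈Z^2} f_ε(x) e^{−i q·x}. -/
open Filter Real MeasureTheory

noncomputable section

/-- Continuum Fourier transform `f̂(p) = ∫ f(x) e^{−i p·x} dx` on `ℝ²`. -/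
def contFT (f : ℝ × ℝ → ℝ) (p : ℝ × ℝ) : ℂ :=
  ∫ x : ℝ × ℝ, (f x : ℂ) * Complex.exp (-Complex.I * ((p.1 * x.1 + p.2 * x.2 : ℝ) : ℂ))

/-- Discrete Fourier transform `ĝ(q) = Σ_{x∈ℤ²} g(x) e^{−i q·x}`. -/
def dft (g : ℤ × ℤ → ℝ) (q : ℝ × ℝ) : ℂ :=
  ∑' x : ℤ × ℤ, (g x : ℂ) * Complex.exp (-Complex.I * ((q.1 * x.1 + q.2 * x.2 : ℝ) : ℂ))

/-- The four nearest-neighbour directions in `ℤ²`. -/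
def dirsZ : Finset (ℤ × ℤ) := {((1 : ℤ), (0 : ℤ)), (-1, 0), (0, 1), (0, -1)}

/-- `(f_ε)` is an admissible discretisation of `f` with constant `C_f`. -/
structure IsAdmissible (f : ℝ × ℝ → ℝ) (fε : ℝ → (ℤ × ℤ) → ℝ) (Cf : ℝ) : Prop where
  finite_supp : ∀ ε ∈ Set.Ioo (0 : ℝ) 1, (Function.support (fε ε)).Finite
  sum_zero : ∀ ε ∈ Set.Ioo (0 : ℝ) 1, ∑' x : ℤ × ℤ, fε ε x = 0
  grad0 : ∀ ε ∈ Set.Ioo (0 : ℝ) 1, ∀ x : ℤ × ℤ, |fε ε x| ≤ Cf * ε ^ 2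
  grad1 : ∀ ε ∈ Set.Ioo (0 : ℝ) 1, ∀ x : ℤ × ℤ, ∀ μ ∈ dirsZ,
    |ε⁻¹ * (fε ε (x + μ) - fε ε x)| ≤ Cf * ε ^ 2
  grad2 : ∀ ε ∈ Set.Ioo (0 : ℝ) 1, ∀ x : ℤ × ℤ, ∀ μ ∈ dirsZ, ∀ ν ∈ dirsZ,
    |ε⁻¹ ^ 2 * (fε ε (x + μ + ν) - fε ε (x + ν) - fε ε (x + μ) + fε ε x)| ≤ Cf * ε ^ 2
  supp : ∀ ε ∈ Set.Ioo (0 : ℝ) 1, ∀ x : ℤ × ℤ, fε ε x ≠ 0 →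
    |(x.1 : ℝ)| ≤ Cf * ε⁻¹ ∧ |(x.2 : ℝ)| ≤ Cf * ε⁻¹
  approx : ∀ δ > (0 : ℝ), ∃ ε₀ > (0 : ℝ), ∀ ε ∈ Set.Ioo (0 : ℝ) 1, ε < ε₀ →
    ∀ x : ℤ × ℤ, |ε⁻¹ ^ 2 * fε ε x - f (ε * x.1, ε * x.2)| ≤ δ

/-- The plane-wave kernel. -/
def pker (q : ℝ × ℝ) (x : ℤ × ℤ) : ℂ :=
  Complex.exp (-Complex.I * ((q.1 * x.1 + q.2 * x.2 : ℝ) : ℂ))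

lemma norm_ker (q : ℝ × ℝ) (x : ℤ × ℤ) : ‖pker q x‖ = 1 := by
  rw [pker, Complex.norm_exp]
  simp

lemma ker_sub (q : ℝ × ℝ) (y μ : ℤ × ℤ) :
    pker q (y - μ) = Complex.exp (Complex.I * ((q.1 * μ.1 + q.2 * μ.2 : ℝ) : ℂ)) * pker q y := by
  rw [pker, pker, ← Complex.exp_add]
  congr 1
  push_cast [Prod.fst_sub, Prod.snd_sub]
  ring

lemma tsum_shift (g : ℤ × ℤ → ℝ) (q : ℝ × ℝ) (μ : ℤ × ℤ) :
    ∑' x : ℤ × ℤ, ((g (x + μ) : ℝ) : ℂ) * pker q x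
      = Complex.exp (Complex.I * ((q.1 * μ.1 + q.2 * μ.2 : ℝ) : ℂ)) *
        ∑' x : ℤ × ℤ, ((g x : ℝ) : ℂ) * pker q x := by
  rw [← tsum_mul_left,
    ← (Equiv.subRight μ).tsum_eq (fun x : ℤ × ℤ => ((g (x + μ) : ℝ) : ℂ) * pker q x)]
  apply tsum_congr
  intro y
  simp only [Equiv.subRight_apply, sub_add_cancel, ker_sub]
  ring

lemma exp_pair (t : ℝ) :
    Complex.exp (Complex.I * (t : ℂ)) + Complex.exp (-(Complex.I * (t : ℂ)))
      = ((2 * Real.cos t : ℝ) : ℂ) := by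
  rw [mul_comm Complex.I ((t : ℝ) : ℂ), Complex.exp_mul_I,
    show -(((t : ℝ) : ℂ) * Complex.I) = (-((t : ℝ) : ℂ)) * Complex.I from by ring,
    Complex.exp_mul_I, Complex.cos_neg, Complex.sin_neg]
  push_cast
  ring

set_option maxHeartbeats 1000000 in
/-- **Quadratic decay of the discrete Fourier transform**: there is `C = C(C_f)` such that
`|f̂_ε(εp)| ≤ C |p|⁻²` for all `ε ∈ (0,1)` and `p ∈ [−π/ε, π/ε]²`, `p ≠ 0`. -/
theorem dft_quadratic_decay (Cf : ℝ) :
    ∃ C : ℝ, ∀ f : ℝ × ℝ → ℝ, ContDiff ℝ (⊤ : ℕ∞) f → HasCompactSupport f →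
      (∫ x : ℝ × ℝ, f x) = 0 →
      ∀ fε : ℝ → (ℤ × ℤ) → ℝ, IsAdmissible f fε Cf →
        ∀ ε ∈ Set.Ioo (0 : ℝ) 1, ∀ p : ℝ × ℝ, p ≠ 0 →
          |p.1| ≤ Real.pi / ε → |p.2| ≤ Real.pi / ε →
          ‖dft (fε ε) (ε * p.1, ε * p.2)‖ ≤ C / (p.1 ^ 2 + p.2 ^ 2) := by
  refine ⟨Real.pi ^ 2 * Cf * (2 * Cf + 7) ^ 2 / 2, ?_⟩
  intro f _ _ _ fε hA ε hε p hp hp1 hp2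
  obtain ⟨hε0, hε1⟩ := hε
  have hπ : (0 : ℝ) < Real.pi := Real.pi_pos
  set g : ℤ × ℤ → ℝ := fε ε with hgdef
  clear_value g
  -- C_f is nonnegative
  have hCf : 0 ≤ Cf := by
    have h := hA.grad0 ε ⟨hε0, hε1⟩ 0
    nlinarith [abs_nonneg (fε ε 0), pow_pos hε0 2]
  have hinvpos : 0 < ε⁻¹ := inv_pos.mpr hε0
  have hinv1 : 1 ≤ ε⁻¹ := by
    nlinarith [mul_inv_cancel₀ (ne_of_gt hε0), mul_nonneg (sub_nonneg.mpr hε1.le) hinvpos.le]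
  -- the box
  set N : ℤ := ⌈Cf * ε⁻¹⌉ + 2 with hNdef
  have hCfε : (0 : ℝ) ≤ Cf * ε⁻¹ := mul_nonneg hCf hinvpos.le
  have hN0 : (0 : ℤ) ≤ N := by
    have := Int.ceil_nonneg hCfε
    omega
  have hN : Cf * ε⁻¹ + 2 ≤ (N : ℝ) := by
    rw [hNdef]; push_cast; linarith [Int.le_ceil (Cf * ε⁻¹)]
  have hNup : (N : ℝ) ≤ Cf * ε⁻¹ + 3 := by
    rw [hNdef]; push_cast; linarith [Int.ceil_lt_add_one (Cf * ε⁻¹)]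
  clear_value N
  set B : Finset (ℤ × ℤ) := (Finset.Icc (-N) N) ×ˢ (Finset.Icc (-N) N) with hBdef
  clear_value B
  set q : ℝ × ℝ := (ε * p.1, ε * p.2) with hqdef
  have hq1 : q.1 = ε * p.1 := by rw [hqdef]
  have hq2 : q.2 = ε * p.2 := by rw [hqdef]
  clear_value q
  -- vanishing outside the box
  have hout : ∀ μ : ℤ × ℤ, |μ.1| ≤ 1 → |μ.2| ≤ 1 → ∀ x : ℤ × ℤ, x ∉ B → g (x + μ) = 0 := by
    intro μ hμ1 hμ2 x hx
    by_contra h0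
    rw [hgdef] at h0
    obtain ⟨h1, h2⟩ := hA.supp ε ⟨hε0, hε1⟩ (x + μ) h0
    apply hx
    rw [hBdef, Finset.mem_product, Finset.mem_Icc, Finset.mem_Icc]
    have hμ1' : |(μ.1 : ℝ)| ≤ 1 := by rw [← Int.cast_abs]; exact_mod_cast hμ1
    have hμ2' : |(μ.2 : ℝ)| ≤ 1 := by rw [← Int.cast_abs]; exact_mod_cast hμ2
    have hax : ((x + μ).1 : ℝ) = (x.1 : ℝ) + (μ.1 : ℝ) := by
      rw [Prod.fst_add]; push_cast; ring
    have hay : ((x + μ).2 : ℝ) = (x.2 : ℝ) + (μ.2 : ℝ) := by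
      rw [Prod.snd_add]; push_cast; ring
    rw [hax] at h1
    rw [hay] at h2
    refine ⟨⟨?_, ?_⟩, ?_, ?_⟩ <;> rw [← Int.cast_le (R := ℝ)] <;> push_cast <;>
      linarith [(abs_le.mp h1).1, (abs_le.mp h1).2, (abs_le.mp h2).1, (abs_le.mp h2).2,
        (abs_le.mp hμ1').1, (abs_le.mp hμ1').2, (abs_le.mp hμ2').1, (abs_le.mp hμ2').2, hN]
  have hout0 : ∀ x : ℤ × ℤ, x ∉ B → g x = 0 := by
    intro x hx
    have := hout (0, 0) (by norm_num) (by norm_num) x hx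
    simpa [show ((0 : ℤ), (0 : ℤ)) = (0 : ℤ × ℤ) from rfl] using this
  -- summability
  have hsum : ∀ μ : ℤ × ℤ, |μ.1| ≤ 1 → |μ.2| ≤ 1 →
      Summable (fun x : ℤ × ℤ => ((g (x + μ) : ℝ) : ℂ) * pker q x) := by
    intro μ h1 h2
    apply summable_of_ne_finset_zero (s := B)
    intro x hx
    rw [hout μ h1 h2 x hx]
    simp
  have hsum0 : Summable (fun x : ℤ × ℤ => ((g x : ℝ) : ℂ) * pker q x) := by
    apply summable_of_ne_finset_zero (s := B)
    intro x hx
    rw [hout0 x hx]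
    simp
  -- the discrete Laplacian
  set D : ℤ × ℤ → ℝ := fun x =>
    g (x + (1, 0)) + g (x + (-1, 0)) + g (x + (0, 1)) + g (x + (0, -1)) - 4 * g x with hDdef
  -- pointwise bound |D x| ≤ 2 C_f ε⁴
  have key : ∀ (x : ℤ × ℤ) (μ ν : ℤ × ℤ), μ ∈ dirsZ → ν ∈ dirsZ →
      |g (x + μ + ν) - g (x + ν) - g (x + μ) + g x| ≤ Cf * ε ^ 4 := by
    intro x μ ν hμ hν
    have h := hA.grad2 ε ⟨hε0, hε1⟩ x μ hμ ν hν
    rw [← hgdef] at h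
    set w : ℝ := g (x + μ + ν) - g (x + ν) - g (x + μ) + g x with hw
    have h2 : ε⁻¹ ^ 2 * |w| ≤ Cf * ε ^ 2 := by
      rwa [abs_mul, abs_of_nonneg (by positivity : (0 : ℝ) ≤ ε⁻¹ ^ 2)] at h
    have h3 := mul_le_mul_of_nonneg_left h2 (le_of_lt (pow_pos hε0 2))
    calc |w| = ε ^ 2 * (ε⁻¹ ^ 2 * |w|) := by
          field_simp
      _ ≤ ε ^ 2 * (Cf * ε ^ 2) := h3
      _ = Cf * ε ^ 4 := by ring
  have hpt1 : ∀ x : ℤ × ℤ, x + ((1 : ℤ), (0 : ℤ)) + ((-1 : ℤ), (0 : ℤ)) = x := by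
    intro x
    ext <;> simp
  have hpt2 : ∀ x : ℤ × ℤ, x + ((0 : ℤ), (1 : ℤ)) + ((0 : ℤ), (-1 : ℤ)) = x := by
    intro x
    ext <;> simp
  have hDb : ∀ x : ℤ × ℤ, |D x| ≤ 2 * Cf * ε ^ 4 := by
    intro x
    have k1 := key x (1, 0) (-1, 0) (by decide) (by decide)
    have k2 := key x (0, 1) (0, -1) (by decide) (by decide)
    rw [hpt1 x] at k1
    rw [hpt2 x] at k2
    have hsplit : D x = -((g x - g (x + (-1, 0)) - g (x + (1, 0)) + g x)
        + (g x - g (x + (0, -1)) - g (x + (0, 1)) + g x)) := by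
      simp only [hDdef]; ring
    rw [hsplit, abs_neg]
    calc |(g x - g (x + (-1, 0)) - g (x + (1, 0)) + g x)
          + (g x - g (x + (0, -1)) - g (x + (0, 1)) + g x)|
        ≤ |g x - g (x + (-1, 0)) - g (x + (1, 0)) + g x|
          + |g x - g (x + (0, -1)) - g (x + (0, 1)) + g x| := abs_add_le _ _
      _ ≤ Cf * ε ^ 4 + Cf * ε ^ 4 := add_le_add k1 k2
      _ = 2 * Cf * ε ^ 4 := by ring
  -- the summed identity
  have e1 : ∑' x : ℤ × ℤ, ((g (x + (1, 0)) : ℝ) : ℂ) * pker q x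
      = Complex.exp (Complex.I * ((q.1 : ℝ) : ℂ)) * ∑' x : ℤ × ℤ, ((g x : ℝ) : ℂ) * pker q x := by
    simpa using tsum_shift g q (1, 0)
  have e2 : ∑' x : ℤ × ℤ, ((g (x + (-1, 0)) : ℝ) : ℂ) * pker q x
      = Complex.exp (-(Complex.I * ((q.1 : ℝ) : ℂ))) * ∑' x : ℤ × ℤ, ((g x : ℝ) : ℂ) * pker q x := by
    have := tsum_shift g q (-1, 0)
    simp only [mul_neg, mul_zero, mul_one, add_zero] at this
    rw [this]
    norm_num
  have e3 : ∑' x : ℤ × ℤ, ((g (x + (0, 1)) : ℝ) : ℂ) * pker q x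
      = Complex.exp (Complex.I * ((q.2 : ℝ) : ℂ)) * ∑' x : ℤ × ℤ, ((g x : ℝ) : ℂ) * pker q x := by
    simpa using tsum_shift g q (0, 1)
  have e4 : ∑' x : ℤ × ℤ, ((g (x + (0, -1)) : ℝ) : ℂ) * pker q x
      = Complex.exp (-(Complex.I * ((q.2 : ℝ) : ℂ))) * ∑' x : ℤ × ℤ, ((g x : ℝ) : ℂ) * pker q x := by
    have := tsum_shift g q (0, -1)
    simp only [mul_neg, mul_zero, mul_one, add_zero, zero_add] at this
    rw [this]
    norm_num
  set cval : ℝ := 2 * Real.cos q.1 + 2 * Real.cos q.2 - 4 with hcvaldef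
  have s1 := hsum (1, 0) (by norm_num) (by norm_num)
  have s2 := hsum (-1, 0) (by norm_num) (by norm_num)
  have s3 := hsum (0, 1) (by norm_num) (by norm_num)
  have s4 := hsum (0, -1) (by norm_num) (by norm_num)
  have hT : ∑' x : ℤ × ℤ, ((D x : ℝ) : ℂ) * pker q x
      = ((cval : ℝ) : ℂ) * ∑' x : ℤ × ℤ, ((g x : ℝ) : ℂ) * pker q x := by
    calc ∑' x : ℤ × ℤ, ((D x : ℝ) : ℂ) * pker q x
        = ∑' x : ℤ × ℤ, (((g (x + (1, 0)) : ℝ) : ℂ) * pker q x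
            + ((g (x + (-1, 0)) : ℝ) : ℂ) * pker q x
            + ((g (x + (0, 1)) : ℝ) : ℂ) * pker q x
            + ((g (x + (0, -1)) : ℝ) : ℂ) * pker q x
            - (4 : ℂ) * (((g x : ℝ) : ℂ) * pker q x)) := by
          apply tsum_congr
          intro x
          simp only [hDdef]
          push_cast
          ring
      _ = (∑' x : ℤ × ℤ, ((g (x + (1, 0)) : ℝ) : ℂ) * pker q x)
            + (∑' x : ℤ × ℤ, ((g (x + (-1, 0)) : ℝ) : ℂ) * pker q x)
            + (∑' x : ℤ × ℤ, ((g (x + (0, 1)) : ℝ) : ℂ) * pker q x)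
            + (∑' x : ℤ × ℤ, ((g (x + (0, -1)) : ℝ) : ℂ) * pker q x)
            - (4 : ℂ) * ∑' x : ℤ × ℤ, ((g x : ℝ) : ℂ) * pker q x := by
          rw [Summable.tsum_sub (((s1.add s2).add s3).add s4) (hsum0.mul_left 4),
            Summable.tsum_add ((s1.add s2).add s3) s4, Summable.tsum_add (s1.add s2) s3, Summable.tsum_add s1 s2,
            tsum_mul_left]
      _ = ((cval : ℝ) : ℂ) * ∑' x : ℤ × ℤ, ((g x : ℝ) : ℂ) * pker q x := by
          rw [e1, e2, e3, e4, hcvaldef]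
          have h12 := exp_pair q.1
          have h34 := exp_pair q.2
          push_cast at h12 h34 ⊢
          linear_combination (∑' x : ℤ × ℤ, ((g x : ℝ) : ℂ) * pker q x) * h12
            + (∑' x : ℤ × ℤ, ((g x : ℝ) : ℂ) * pker q x) * h34
  -- cardinality bound
  have hcard : (B.card : ℝ) ≤ ((2 * Cf + 7) / ε) ^ 2 := by
    have h1 : B.card = ((2 * N + 1).toNat) * ((2 * N + 1).toNat) := by
      rw [hBdef, Finset.card_product, Int.card_Icc]
      congr 2 <;> ring
    have hposN : (0 : ℤ) ≤ 2 * N + 1 := by linarith [hN0]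
    have h2 : ((2 * N + 1).toNat : ℝ) = ((2 * N + 1 : ℤ) : ℝ) := by
      exact_mod_cast Int.toNat_of_nonneg hposN
    have h3 : ((2 * N + 1 : ℤ) : ℝ) ≤ (2 * Cf + 7) / ε := by
      push_cast
      rw [div_eq_mul_inv]
      nlinarith [hNup, hCf, hinv1]
    have h4 : (0 : ℝ) ≤ ((2 * N + 1 : ℤ) : ℝ) := by
      exact_mod_cast hposN
    calc (B.card : ℝ) = ((2 * N + 1 : ℤ) : ℝ) * ((2 * N + 1 : ℤ) : ℝ) := by
          rw [h1]; push_cast [h2]; ring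
      _ ≤ ((2 * Cf + 7) / ε) * ((2 * Cf + 7) / ε) :=
          mul_le_mul h3 h3 h4 (by positivity)
      _ = ((2 * Cf + 7) / ε) ^ 2 := by ring
  -- norm bound on the Laplacian sum
  have hDout : ∀ x : ℤ × ℤ, x ∉ B → ((D x : ℝ) : ℂ) * pker q x = 0 := by
    intro x hx
    have hz : D x = 0 := by
      simp only [hDdef]
      rw [hout (1, 0) (by norm_num) (by norm_num) x hx,
        hout (-1, 0) (by norm_num) (by norm_num) x hx,
        hout (0, 1) (by norm_num) (by norm_num) x hx,
        hout (0, -1) (by norm_num) (by norm_num) x hx,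
        hout0 x hx]
      ring
    rw [hz]
    simp
  have hTle : ‖∑' x : ℤ × ℤ, ((D x : ℝ) : ℂ) * pker q x‖ ≤ 2 * Cf * (2 * Cf + 7) ^ 2 * ε ^ 2 := by
    rw [tsum_eq_sum hDout]
    calc ‖∑ x ∈ B, ((D x : ℝ) : ℂ) * pker q x‖
        ≤ ∑ x ∈ B, ‖((D x : ℝ) : ℂ) * pker q x‖ := norm_sum_le _ _
      _ = ∑ x ∈ B, |D x| := by
          apply Finset.sum_congr rfl
          intro x _
          rw [norm_mul, norm_ker, mul_one, Complex.norm_real, Real.norm_eq_abs]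
      _ ≤ ∑ _x ∈ B, (2 * Cf * ε ^ 4) := Finset.sum_le_sum (fun x _ => hDb x)
      _ = (B.card : ℝ) * (2 * Cf * ε ^ 4) := by
          rw [Finset.sum_const, nsmul_eq_mul]
      _ ≤ ((2 * Cf + 7) / ε) ^ 2 * (2 * Cf * ε ^ 4) := by
          apply mul_le_mul_of_nonneg_right hcard
          have : (0 : ℝ) ≤ ε ^ 4 := le_of_lt (pow_pos hε0 4)
          nlinarith
      _ = 2 * Cf * (2 * Cf + 7) ^ 2 * ε ^ 2 := by
          field_simp
  -- positivity of |p|²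
  have hppos : 0 < p.1 ^ 2 + p.2 ^ 2 := by
    have hne : p.1 ≠ 0 ∨ p.2 ≠ 0 := by
      by_contra h
      push_neg at h
      exact hp (by rw [Prod.ext_iff]; simp [h.1, h.2])
    rcases hne with h | h
    · have : 0 < p.1 ^ 2 := by rw [← sq_abs]; exact pow_pos (abs_pos.mpr h) 2
      linarith [sq_nonneg p.2]
    · have : 0 < p.2 ^ 2 := by rw [← sq_abs]; exact pow_pos (abs_pos.mpr h) 2
      linarith [sq_nonneg p.1]
  -- lower bound on |cval|
  have hq1abs : |q.1| ≤ Real.pi := by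
    rw [hq1, abs_mul, abs_of_pos hε0]
    calc ε * |p.1| ≤ ε * (Real.pi / ε) := mul_le_mul_of_nonneg_left hp1 hε0.le
      _ = Real.pi := by field_simp
  have hq2abs : |q.2| ≤ Real.pi := by
    rw [hq2, abs_mul, abs_of_pos hε0]
    calc ε * |p.2| ≤ ε * (Real.pi / ε) := mul_le_mul_of_nonneg_left hp2 hε0.le
      _ = Real.pi := by field_simp
  have hsin : ∀ t : ℝ, |t| ≤ Real.pi → t ^ 2 / Real.pi ^ 2 ≤ Real.sin (t / 2) ^ 2 := by
    intro t ht
    have h2 : |t / 2| ≤ Real.pi / 2 := by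
      rw [abs_div, abs_of_pos (by norm_num : (0 : ℝ) < 2)]
      linarith
    have h3 := Real.mul_abs_le_abs_sin h2
    have h4 := pow_le_pow_left₀ (by positivity) h3 2
    rw [sq_abs] at h4
    calc t ^ 2 / Real.pi ^ 2 = (2 / Real.pi * |t / 2|) ^ 2 := by
          rw [mul_pow, sq_abs, div_pow, div_pow]
          field_simp
      _ ≤ _ := h4
  have hcos : ∀ t : ℝ, Real.cos t = 1 - 2 * Real.sin (t / 2) ^ 2 := by
    intro t
    have h1 : Real.cos (2 * (t / 2)) = 2 * Real.cos (t / 2) ^ 2 - 1 := Real.cos_two_mul (t / 2)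
    have h2 := Real.sin_sq_add_cos_sq (t / 2)
    rw [show 2 * (t / 2) = t from by ring] at h1
    linarith
  have habs : |cval| = 4 * Real.sin (q.1 / 2) ^ 2 + 4 * Real.sin (q.2 / 2) ^ 2 := by
    have hcv : cval = -(4 * Real.sin (q.1 / 2) ^ 2 + 4 * Real.sin (q.2 / 2) ^ 2) := by
      rw [hcvaldef, hcos q.1, hcos q.2]; ring
    rw [hcv, abs_neg, abs_of_nonneg (by positivity)]
  have hlow : 4 * ε ^ 2 * (p.1 ^ 2 + p.2 ^ 2) / Real.pi ^ 2 ≤ |cval| := by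
    rw [habs]
    have hs1 := hsin q.1 hq1abs
    have hs2 := hsin q.2 hq2abs
    have heq : 4 * ε ^ 2 * (p.1 ^ 2 + p.2 ^ 2) / Real.pi ^ 2
        = 4 * (q.1 ^ 2 / Real.pi ^ 2) + 4 * (q.2 ^ 2 / Real.pi ^ 2) := by
      rw [hq1, hq2]; ring
    rw [heq]
    linarith
  have hcpos : 0 < |cval| := by
    apply lt_of_lt_of_le _ hlow
    apply div_pos _ (by positivity)
    nlinarith [pow_pos hε0 2]
  -- assemble
  have hdfteq : dft g q = ∑' x : ℤ × ℤ, ((g x : ℝ) : ℂ) * pker q x := rfl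
  have hnorm : |cval| * ‖dft g q‖ ≤ 2 * Cf * (2 * Cf + 7) ^ 2 * ε ^ 2 := by
    have heq : |cval| * ‖dft g q‖ = ‖∑' x : ℤ × ℤ, ((D x : ℝ) : ℂ) * pker q x‖ := by
      rw [hT, norm_mul, Complex.norm_real, Real.norm_eq_abs, hdfteq]
    rw [heq]
    exact hTle
  have hstep : (4 * ε ^ 2 * (p.1 ^ 2 + p.2 ^ 2) / Real.pi ^ 2) * ‖dft g q‖
      ≤ 2 * Cf * (2 * Cf + 7) ^ 2 * ε ^ 2 :=
    le_trans (mul_le_mul_of_nonneg_right hlow (norm_nonneg _)) hnorm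
  show ‖dft g q‖ ≤ Real.pi ^ 2 * Cf * (2 * Cf + 7) ^ 2 / 2 / (p.1 ^ 2 + p.2 ^ 2)
  rw [le_div_iff₀ hppos]
  have h4 : (0 : ℝ) < 4 * ε ^ 2 / Real.pi ^ 2 := by positivity
  rw [← mul_le_mul_iff_right₀ h4]
  calc 4 * ε ^ 2 / Real.pi ^ 2 * (‖dft g q‖ * (p.1 ^ 2 + p.2 ^ 2))
      = (4 * ε ^ 2 * (p.1 ^ 2 + p.2 ^ 2) / Real.pi ^ 2) * ‖dft g q‖ := by ring
    _ ≤ 2 * Cf * (2 * Cf + 7) ^ 2 * ε ^ 2 := hstep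
    _ = 4 * ε ^ 2 / Real.pi ^ 2 * (Real.pi ^ 2 * Cf * (2 * Cf + 7) ^ 2 / 2) := by
        field_simp
        ring

end
end

section
/- Let f ∈ C_c^∞(R^2) with ∫ f dx = 0 and let (f_ε) be an admissible discretisation of f with constant C_f. Then there is a universal constant C such that for all ε ∈ (0,1) and all p ∈ R^2: |f̂_ε(εp)| ≤ C C_f^4 |p|, where f̂_ε(q) = Σ_{x∈Z^2} f_ε(x) e^{−i q·x}. -/
open Filter Real MeasureTheory

noncomputable section

private lemma exp_bound_aux (θ : ℝ) : ‖Complex.exp (-Complex.I * θ) - 1‖ ≤ 2 * |θ| := by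
  by_cases h : |θ| ≤ 1
  · have habs : ‖(-Complex.I * θ)‖ = |θ| := by
      simp [Complex.norm_real]
    have h2 := Complex.norm_exp_sub_one_le (x := -Complex.I * θ) (by rw [habs]; exact h)
    rw [habs] at h2
    simpa using h2
  · push_neg at h
    have h1 : ‖Complex.exp (-Complex.I * θ)‖ = 1 := by
      have he : -Complex.I * θ = (-θ : ℝ) * Complex.I := by push_cast; ring
      rw [he, Complex.norm_exp_ofReal_mul_I]
    calc ‖Complex.exp (-Complex.I * θ) - 1‖ ≤ ‖Complex.exp (-Complex.I * θ)‖ + ‖(1:ℂ)‖ :=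
          norm_sub_le _ _
      _ = 2 := by rw [h1]; norm_num
      _ ≤ 2 * |θ| := by nlinarith

set_option maxHeartbeats 1600000 in
/-- **Linear bound on the discrete Fourier transform**: there is a universal constant `C`
such that `|f̂_ε(εp)| ≤ C C_f⁴ |p|` for all `ε ∈ (0,1)` and all `p ∈ ℝ²`. -/
theorem dft_linear_bound :
    ∃ C : ℝ, ∀ (f : ℝ × ℝ → ℝ), ContDiff ℝ (⊤ : ℕ∞) f → HasCompactSupport f →
      (∫ x : ℝ × ℝ, f x) = 0 →
      ∀ (fε : ℝ → (ℤ × ℤ) → ℝ) (Cf : ℝ), IsAdmissible f fε Cf →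
        ∀ ε ∈ Set.Ioo (0 : ℝ) 1, ∀ p : ℝ × ℝ,
          ‖dft (fε ε) (ε * p.1, ε * p.2)‖ ≤ C * Cf ^ 4 * Real.sqrt (p.1 ^ 2 + p.2 ^ 2) := by
  use 1000
  intro f _ _ _ fε Cf hA ε hε p
  obtain ⟨hε0, hε1⟩ := hε
  have hεIoo : ε ∈ Set.Ioo (0:ℝ) 1 := ⟨hε0, hε1⟩
  set q : ℝ × ℝ := (ε * p.1, ε * p.2) with hq
  have hCf0 : 0 ≤ Cf := by
    have h := hA.grad0 ε hεIoo 0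
    nlinarith [abs_nonneg (fε ε (0 : ℤ × ℤ)), pow_pos hε0 2]
  have hP : (0:ℝ) ≤ Real.sqrt (p.1^2+p.2^2) := Real.sqrt_nonneg _
  by_cases hz : ∀ x : ℤ × ℤ, fε ε x = 0
  · have hd : dft (fε ε) q = 0 := by unfold dft; simp [hz]
    rw [hd, norm_zero]
    positivity
  push_neg at hz
  obtain ⟨x₀, hx₀⟩ := hz
  have hfin := hA.finite_supp ε hεIoo
  set s : Finset (ℤ × ℤ) := hfin.toFinset with hs
  have hmem : ∀ x, x ∈ s ↔ fε ε x ≠ 0 := fun x => by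
    simp [hs, Set.Finite.mem_toFinset, Function.mem_support]
  set E : ℤ × ℤ → ℂ := fun x => Complex.exp (-Complex.I * ((q.1 * x.1 + q.2 * x.2 : ℝ) : ℂ))
    with hE
  set F : ℤ × ℤ → ℂ := fun x => (fε ε x : ℂ) * E x with hF
  have hFz : ∀ x ∉ s, F x = 0 := by
    intro x hx
    have h0 : fε ε x = 0 := by by_contra h; exact hx ((hmem x).mpr h)
    simp [hF, h0]
  have hfz : ∀ x ∉ s, fε ε x = 0 := by
    intro x hx; by_contra h; exact hx ((hmem x).mpr h)
  have hdft : dft (fε ε) q = ∑ x ∈ s, F x := tsum_eq_sum hFz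
  have hsum0 : ∑ x ∈ s, fε ε x = 0 := by
    rw [← tsum_eq_sum (L := SummationFilter.unconditional _) hfz]; exact hA.sum_zero ε hεIoo
  have hc : ∑ x ∈ s, ((fε ε x : ℝ) : ℂ) = 0 := by
    rw [← Complex.ofReal_sum, hsum0, Complex.ofReal_zero]
  have key : dft (fε ε) q = ∑ x ∈ s, (fε ε x : ℂ) * (E x - 1) := by
    rw [hdft]
    have : ∑ x ∈ s, (fε ε x : ℂ) * (E x - 1)
        = (∑ x ∈ s, F x) - ∑ x ∈ s, ((fε ε x : ℝ) : ℂ) := by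
      rw [← Finset.sum_sub_distrib]
      exact Finset.sum_congr rfl (fun x _ => by simp [hF]; ring)
    rw [this, hc, sub_zero]
  set R : ℝ := Cf * ε⁻¹ with hR
  set M : ℝ := |p.1| + |p.2| with hM
  have hM0 : 0 ≤ M := by positivity
  have hR0 : 0 ≤ R := by positivity
  set B : ℝ := Cf * ε^2 * (2 * (Cf * M)) with hB
  have hB0 : 0 ≤ B := by positivity
  -- per-term bound
  have hterm : ∀ x ∈ s, ‖(fε ε x : ℂ) * (E x - 1)‖ ≤ B := by
    intro x hx
    have hsupp := hA.supp ε hεIoo x ((hmem x).mp hx)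
    have hg : ‖((fε ε x : ℝ) : ℂ)‖ = |fε ε x| := by
      rw [Complex.norm_real, Real.norm_eq_abs]
    have hg2 : |fε ε x| ≤ Cf * ε^2 := hA.grad0 ε hεIoo x
    have hθ : |q.1 * (x.1:ℝ) + q.2 * (x.2:ℝ)| ≤ Cf * M := by
      have h1 : |q.1 * (x.1:ℝ)| ≤ Cf * |p.1| := by
        rw [hq, abs_mul, abs_mul, abs_of_pos hε0]
        calc ε * |p.1| * |(x.1:ℝ)| ≤ ε * |p.1| * (Cf * ε⁻¹) := by
              apply mul_le_mul_of_nonneg_left hsupp.1 (by positivity)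
          _ = Cf * |p.1| * (ε * ε⁻¹) := by ring
          _ = Cf * |p.1| := by rw [mul_inv_cancel₀ hε0.ne', mul_one]
      have h2 : |q.2 * (x.2:ℝ)| ≤ Cf * |p.2| := by
        rw [hq, abs_mul, abs_mul, abs_of_pos hε0]
        calc ε * |p.2| * |(x.2:ℝ)| ≤ ε * |p.2| * (Cf * ε⁻¹) := by
              apply mul_le_mul_of_nonneg_left hsupp.2 (by positivity)
          _ = Cf * |p.2| * (ε * ε⁻¹) := by ring
          _ = Cf * |p.2| := by rw [mul_inv_cancel₀ hε0.ne', mul_one]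
      calc |q.1 * (x.1:ℝ) + q.2 * (x.2:ℝ)| ≤ |q.1 * (x.1:ℝ)| + |q.2 * (x.2:ℝ)| := abs_add_le _ _
        _ ≤ Cf * |p.1| + Cf * |p.2| := add_le_add h1 h2
        _ = Cf * M := by rw [hM]; ring
    have hEb : ‖E x - 1‖ ≤ 2 * (Cf * M) := by
      calc ‖E x - 1‖ ≤ 2 * |q.1 * (x.1:ℝ) + q.2 * (x.2:ℝ)| := exp_bound_aux _
        _ ≤ 2 * (Cf * M) := by linarith
    calc ‖(fε ε x : ℂ) * (E x - 1)‖ = |fε ε x| * ‖E x - 1‖ := by rw [norm_mul, hg]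
      _ ≤ (Cf * ε^2) * (2 * (Cf * M)) := by
          apply mul_le_mul hg2 hEb (norm_nonneg _) (by positivity)
      _ = B := by rw [hB]
  -- two distinct support points give R ≥ 1/2
  have h2pts : ∃ y, fε ε y ≠ 0 ∧ y ≠ x₀ := by
    by_contra h
    push_neg at h
    have hx0s : x₀ ∈ s := (hmem x₀).mpr hx₀
    have hseq : s = {x₀} := Finset.eq_singleton_iff_unique_mem.mpr
      ⟨hx0s, fun b hb => h b ((hmem b).mp hb)⟩
    rw [hseq, Finset.sum_singleton] at hsum0
    exact hx₀ hsum0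
  obtain ⟨y, hy, hyx⟩ := h2pts
  have hRhalf : (1:ℝ)/2 ≤ R := by
    have hsx := hA.supp ε hεIoo x₀ hx₀
    have hsy := hA.supp ε hεIoo y hy
    have hne : x₀.1 ≠ y.1 ∨ x₀.2 ≠ y.2 := by
      by_contra h
      push_neg at h
      exact hyx (Prod.ext h.1 h.2).symm
    rcases hne with h | h
    · have h1 : (1:ℤ) ≤ |x₀.1 - y.1| := Int.one_le_abs (sub_ne_zero.mpr h)
      have h1' : (1:ℝ) ≤ |(x₀.1:ℝ) - (y.1:ℝ)| := by exact_mod_cast h1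
      have h2 : |(x₀.1:ℝ) - (y.1:ℝ)| ≤ |(x₀.1:ℝ)| + |(y.1:ℝ)| := abs_sub _ _
      have := hsx.1; have := hsy.1
      rw [hR]; linarith
    · have h1 : (1:ℤ) ≤ |x₀.2 - y.2| := Int.one_le_abs (sub_ne_zero.mpr h)
      have h1' : (1:ℝ) ≤ |(x₀.2:ℝ) - (y.2:ℝ)| := by exact_mod_cast h1
      have h2 : |(x₀.2:ℝ) - (y.2:ℝ)| ≤ |(x₀.2:ℝ)| + |(y.2:ℝ)| := abs_sub _ _
      have := hsx.2; have := hsy.2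
      rw [hR]; linarith
  -- cardinality bound
  set N : ℤ := ⌈R⌉ with hN
  have hN0 : 0 ≤ N := Int.ceil_nonneg hR0
  have hNR : (N:ℝ) < R + 1 := Int.ceil_lt_add_one R
  have hRN : R ≤ (N:ℝ) := Int.le_ceil R
  have hsub : s ⊆ Finset.Icc (-N) N ×ˢ Finset.Icc (-N) N := by
    intro x hx
    have hsupp := hA.supp ε hεIoo x ((hmem x).mp hx)
    rw [Finset.mem_product, Finset.mem_Icc, Finset.mem_Icc]
    constructor
    · constructor
      · have : -(N:ℝ) ≤ (x.1:ℝ) := le_trans (by linarith [hRN]) (neg_le_of_abs_le hsupp.1)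
        exact_mod_cast this
      · have : (x.1:ℝ) ≤ (N:ℝ) := le_trans (le_of_abs_le hsupp.1) hRN
        exact_mod_cast this
    · constructor
      · have : -(N:ℝ) ≤ (x.2:ℝ) := le_trans (by linarith [hRN]) (neg_le_of_abs_le hsupp.2)
        exact_mod_cast this
      · have : (x.2:ℝ) ≤ (N:ℝ) := le_trans (le_of_abs_le hsupp.2) hRN
        exact_mod_cast this
  have hcard : (s.card : ℝ) ≤ (8*R)^2 := by
    have h1 : s.card ≤ (Finset.Icc (-N) N ×ˢ Finset.Icc (-N) N).card :=
      Finset.card_le_card hsub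
    have h2 : (Finset.Icc (-N) N ×ˢ Finset.Icc (-N) N).card
        = (N + 1 - (-N)).toNat * (N + 1 - (-N)).toNat := by
      rw [Finset.card_product, Int.card_Icc]
    have h3' : ((N + 1 - (-N)).toNat : ℤ) = 2*N + 1 := by
      rw [Int.toNat_of_nonneg (by omega)]; ring
    have h3 : ((N + 1 - (-N)).toNat : ℝ) = 2*(N:ℝ) + 1 := by
      have := congrArg (fun z : ℤ => (z : ℝ)) h3'
      push_cast at this
      simpa using this
    have h4 : (2*(N:ℝ) + 1) ≤ 8 * R := by linarith
    have h5 : (s.card : ℝ) ≤ (2*(N:ℝ)+1) * (2*(N:ℝ)+1) := by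
      calc (s.card : ℝ) ≤ ((Finset.Icc (-N) N ×ˢ Finset.Icc (-N) N).card : ℝ) := by
            exact_mod_cast h1
        _ = (2*(N:ℝ)+1) * (2*(N:ℝ)+1) := by rw [h2, Nat.cast_mul, h3]
    have hNpos : (0:ℝ) ≤ 2*(N:ℝ)+1 := by positivity
    nlinarith
  -- main estimate
  have hmain : ‖dft (fε ε) q‖ ≤ (s.card : ℝ) * B := by
    rw [key]
    calc ‖∑ x ∈ s, (fε ε x : ℂ) * (E x - 1)‖
        ≤ ∑ x ∈ s, ‖(fε ε x : ℂ) * (E x - 1)‖ := norm_sum_le _ _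
      _ ≤ ∑ _x ∈ s, B := Finset.sum_le_sum hterm
      _ = (s.card : ℝ) * B := by rw [Finset.sum_const, nsmul_eq_mul]
  have hRe : R * ε = Cf := by
    rw [hR]; field_simp
  have hstep : (s.card : ℝ) * B ≤ 128 * Cf^4 * M := by
    calc (s.card : ℝ) * B ≤ (8*R)^2 * B := mul_le_mul_of_nonneg_right hcard hB0
      _ = 128 * Cf^2 * ((R*ε)^2) * M := by rw [hB]; ring
      _ = 128 * Cf^4 * M := by rw [hRe]; ring
  have hMp : M ≤ 2 * Real.sqrt (p.1^2 + p.2^2) := by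
    have h1 : |p.1| ≤ Real.sqrt (p.1^2+p.2^2) := by
      rw [← Real.sqrt_sq_eq_abs]; exact Real.sqrt_le_sqrt (by nlinarith [sq_nonneg p.2])
    have h2 : |p.2| ≤ Real.sqrt (p.1^2+p.2^2) := by
      rw [← Real.sqrt_sq_eq_abs]; exact Real.sqrt_le_sqrt (by nlinarith [sq_nonneg p.1])
    rw [hM]; linarith
  have hCf4 : (0:ℝ) ≤ Cf^4 := by positivity
  calc ‖dft (fε ε) q‖ ≤ (s.card : ℝ) * B := hmain
    _ ≤ 128 * Cf^4 * M := hstep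
    _ ≤ 128 * Cf^4 * (2 * Real.sqrt (p.1^2+p.2^2)) := by
        apply mul_le_mul_of_nonneg_left hMp (by positivity)
    _ ≤ 1000 * Cf^4 * Real.sqrt (p.1^2+p.2^2) := by nlinarith [mul_nonneg hCf4 hP]

end
end

section
/- Let f ∈ C_c^∞(R^2) with ∫ f dx = 0 and let (f_ε) be an admissible discretisation of f with constant C_f. Then there is a constant C depending only on C_f such that for all ε ∈ (0,1) and all p ∈ [−π/ε, π/ε]^2: |f̂_ε(εp)| ≤ C |p| (1 + |p|)^{−3}, where f̂_ε(q) = Σ_{x∈Z^2} f_ε(x) e^{−i q·x}. -/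
open Filter Real MeasureTheory

noncomputable section

/-! ### Auxiliary lemmas -/

lemma norm_exp_neg_I_aux (r : ℝ) : ‖Complex.exp (-Complex.I * r)‖ = 1 := by
  rw [Complex.norm_exp]; simp

lemma exp_neg_I_eq_aux (r : ℝ) :
    Complex.exp (-Complex.I * r) = (Real.cos r : ℂ) - (Real.sin r : ℂ) * Complex.I := by
  rw [show -Complex.I * (r:ℂ) = ((-r : ℝ) : ℂ) * Complex.I by push_cast; ring,
    Complex.exp_mul_I, ← Complex.ofReal_cos, ← Complex.ofReal_sin]
  push_cast
  simp [Real.cos_neg, Real.sin_neg]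
  ring

lemma norm_sq_exp_sub_one_aux (r : ℝ) :
    ‖Complex.exp (-Complex.I * r) - 1‖ ^ 2 = 2 - 2 * Real.cos r := by
  rw [exp_neg_I_eq_aux]
  rw [show (Real.cos r : ℂ) - (Real.sin r : ℂ) * Complex.I - 1
      = ((Real.cos r - 1 : ℝ) : ℂ) + ((-Real.sin r : ℝ) : ℂ) * Complex.I by push_cast; ring]
  rw [Complex.sq_norm, Complex.normSq_add_mul_I]
  nlinarith [Real.sin_sq_add_cos_sq r]

lemma norm_exp_sub_one_le_aux (r : ℝ) :
    ‖Complex.exp (-Complex.I * r) - 1‖ ≤ |r| := by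
  have h2 := norm_sq_exp_sub_one_aux r
  have hc := Real.one_sub_sq_div_two_le_cos (x := r)
  have hn : (0:ℝ) ≤ ‖Complex.exp (-Complex.I * r) - 1‖ := norm_nonneg _
  nlinarith [abs_nonneg r, sq_abs r]

lemma norm_exp_sub_one_ge_aux (r : ℝ) (h : |r| ≤ π) :
    2 / π * |r| ≤ ‖Complex.exp (-Complex.I * r) - 1‖ := by
  have h2 := norm_sq_exp_sub_one_aux r
  have hc := Real.cos_le_one_sub_mul_cos_sq h
  have hn : (0:ℝ) ≤ ‖Complex.exp (-Complex.I * r) - 1‖ := norm_nonneg _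
  have hπ := Real.pi_pos
  have key : (2 / π * |r|) ^ 2 ≤ ‖Complex.exp (-Complex.I * r) - 1‖ ^ 2 := by
    rw [h2, mul_pow, sq_abs, div_pow]
    have h4 : (2:ℝ)^2 / π^2 * r^2 = 2 * (2 / π^2 * r^2) := by ring
    rw [h4]
    linarith
  calc 2 / π * |r| = Real.sqrt ((2 / π * |r|)^2) := by
        rw [Real.sqrt_sq (by positivity)]
    _ ≤ Real.sqrt (‖Complex.exp (-Complex.I * r) - 1‖^2) := Real.sqrt_le_sqrt key
    _ = _ := Real.sqrt_sq hn

lemma dft_eq_sum_aux (g : ℤ × ℤ → ℝ) (T : Finset (ℤ × ℤ)) (hT : ∀ x ∉ T, g x = 0) (q : ℝ × ℝ) :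
    dft g q = ∑ x ∈ T, (g x : ℂ) * Complex.exp (-Complex.I * ((q.1 * x.1 + q.2 * x.2 : ℝ) : ℂ)) :=
  tsum_eq_sum (by intro b hb; simp [hT b hb])

lemma norm_dft_le_aux (g : ℤ × ℤ → ℝ) (T : Finset (ℤ × ℤ)) (hT : ∀ x ∉ T, g x = 0) (q : ℝ × ℝ) :
    ‖dft g q‖ ≤ ∑ x ∈ T, |g x| := by
  rw [dft_eq_sum_aux g T hT q]
  refine (norm_sum_le _ _).trans (Finset.sum_le_sum fun x _ => ?_)
  rw [norm_mul, norm_exp_neg_I_aux, mul_one, Complex.norm_real, Real.norm_eq_abs]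

lemma summable_dft_aux (g : ℤ × ℤ → ℝ) (hg : (Function.support g).Finite) (q : ℝ × ℝ) :
    Summable (fun x : ℤ × ℤ =>
      (g x : ℂ) * Complex.exp (-Complex.I * ((q.1 * x.1 + q.2 * x.2 : ℝ) : ℂ))) := by
  apply summable_of_ne_finset_zero (s := hg.toFinset)
  intro b hb
  have : g b = 0 := by simpa using (Function.notMem_support.mp (by simpa using hb))
  simp [this]

lemma support_shift_finite_aux (g : ℤ × ℤ → ℝ) (hg : (Function.support g).Finite) (μ : ℤ × ℤ) :
    (Function.support (fun y : ℤ × ℤ => g (y - μ))).Finite := by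
  have : Function.support (fun y : ℤ × ℤ => g (y - μ))
      ⊆ (fun y : ℤ × ℤ => y + μ) '' Function.support g := by
    intro y hy
    exact ⟨y - μ, hy, by simp⟩
  exact (hg.image _).subset this

lemma dft_shift_aux (g : ℤ × ℤ → ℝ) (q : ℝ × ℝ) (μ : ℤ × ℤ) :
    Complex.exp (-Complex.I * ((q.1 * μ.1 + q.2 * μ.2 : ℝ) : ℂ)) * dft g q
      = dft (fun y => g (y - μ)) q := by
  rw [dft, dft, ← tsum_mul_left]
  rw [← (Equiv.addRight μ).tsum_eq
    (fun y : ℤ × ℤ => ((fun y => g (y - μ)) y : ℂ) *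
      Complex.exp (-Complex.I * ((q.1 * y.1 + q.2 * y.2 : ℝ) : ℂ)))]
  congr 1
  funext x
  simp only [Equiv.coe_addRight, add_sub_cancel_right]
  rw [← mul_assoc, mul_comm (Complex.exp _) ((g x : ℂ)), mul_assoc, ← Complex.exp_add]
  congr 2
  simp only [Prod.fst_add, Prod.snd_add]
  push_cast
  ring

lemma dft_diff_aux (g : ℤ × ℤ → ℝ) (hg : (Function.support g).Finite) (q : ℝ × ℝ) (μ : ℤ × ℤ) :
    (Complex.exp (-Complex.I * ((q.1 * μ.1 + q.2 * μ.2 : ℝ) : ℂ)) - 1) * dft g q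
      = dft (fun y => g (y - μ) - g y) q := by
  have hs := support_shift_finite_aux g hg μ
  have h1 := dft_shift_aux g q μ
  rw [sub_mul, one_mul, h1, dft, dft, dft,
    ← Summable.tsum_sub (summable_dft_aux _ hs q) (summable_dft_aux g hg q)]
  congr 1
  funext x
  push_cast
  ring

lemma dft_sq_diff_aux (g : ℤ × ℤ → ℝ) (hg : (Function.support g).Finite) (q : ℝ × ℝ) (μ : ℤ × ℤ) :
    (Complex.exp (-Complex.I * ((q.1 * μ.1 + q.2 * μ.2 : ℝ) : ℂ)) - 1) ^ 2 * dft g q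
      = dft (fun y => g (y - μ - μ) - g (y - μ) - g (y - μ) + g y) q := by
  have hh : (Function.support (fun y : ℤ × ℤ => g (y - μ) - g y)).Finite := by
    have h1 := support_shift_finite_aux g hg μ
    have hsub : Function.support (fun y : ℤ × ℤ => g (y - μ) - g y)
        ⊆ (Function.support fun y : ℤ × ℤ => g (y - μ)) ∪ Function.support g := by
      intro y hy
      by_contra hc
      simp only [Set.mem_union, Function.mem_support, not_or, not_not] at hc
      simp only [Function.mem_support] at hy
      exact hy (by simp [hc.1, hc.2])
    exact (h1.union hg).subset hsub
  have k1 := dft_diff_aux g hg q μ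
  have k2 := dft_diff_aux _ hh q μ
  rw [sq, mul_assoc, k1, k2]
  congr 1
  funext y
  ring

lemma sq_card_aux (a b c : ℝ) (h1 : a ≤ b * b) (h2 : b ≤ c) (h3 : 0 ≤ b) : a ≤ c ^ 2 := by
  nlinarith

lemma high_arith_aux (D K e pp rr C2 piv : ℝ) (hD : 0 ≤ D) (hpiv : 0 < piv) (he : 0 < e)
    (h6 : D * (4 / piv ^ 2 * e ^ 2 * pp) ≤ 3 * K * e ^ 2) (h8 : rr ≤ 2 * pp)
    (hC2 : C2 = 3 * piv ^ 2 * K / 2) : D * rr ≤ C2 := by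
  have h1 : D * rr ≤ D * (2 * pp) := mul_le_mul_of_nonneg_left h8 hD
  have hc : (0:ℝ) < 4 * e ^ 2 / piv ^ 2 := by positivity
  have h2 : D * (4 / piv ^ 2 * e ^ 2 * pp) = (4 * e ^ 2 / piv ^ 2) * (D * pp) := by ring
  rw [h2] at h6
  have h3 : D * pp ≤ 3 * K * e ^ 2 / (4 * e ^ 2 / piv ^ 2) := by
    rw [le_div_iff₀ hc]
    linarith
  have h4 : 3 * K * e ^ 2 / (4 * e ^ 2 / piv ^ 2) = 3 * piv ^ 2 * K / 4 := by
    field_simp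
  rw [h4] at h3
  rw [hC2]
  nlinarith

lemma comb_small_aux (D C1 C2 r : ℝ) (hD0 : 0 ≤ D) (hD : D ≤ C1 * r) (hr0 : 0 ≤ r)
    (hr1 : r ≤ 1) (hC2 : 0 ≤ C2) : D * (1 + r) ^ 3 ≤ (8 * C1 + 8 * C2) * r := by
  have hC1r : 0 ≤ C1 * r := le_trans hD0 hD
  have h8 : (1 + r) ^ 3 ≤ 8 := by nlinarith [sq_nonneg r, sq_nonneg (1+r), mul_nonneg hr0 hr0]
  have a1 : D * (1 + r) ^ 3 ≤ (C1 * r) * (1 + r) ^ 3 :=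
    mul_le_mul_of_nonneg_right hD (by positivity)
  have a2 : (C1 * r) * (1 + r) ^ 3 ≤ (C1 * r) * 8 := mul_le_mul_of_nonneg_left h8 hC1r
  nlinarith [mul_nonneg hC2 hr0]

lemma comb_large_aux (D C1 C2 r : ℝ) (hD0 : 0 ≤ D) (hh : D * r ^ 2 ≤ C2) (hr1 : 1 ≤ r)
    (hC1 : 0 ≤ C1) : D * (1 + r) ^ 3 ≤ (8 * C1 + 8 * C2) * r := by
  have h8 : (1 + r) ^ 3 ≤ 8 * r ^ 3 := by nlinarith
  have a1 : D * (1 + r) ^ 3 ≤ D * (8 * r ^ 3) := mul_le_mul_of_nonneg_left h8 hD0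
  have a2 : 8 * r * (D * r ^ 2) ≤ 8 * r * C2 := mul_le_mul_of_nonneg_left hh (by linarith)
  nlinarith [mul_nonneg hC1 (by linarith : (0:ℝ) ≤ r)]

set_option maxHeartbeats 1000000 in
/-- **Combined bound on the discrete Fourier transform**: there is `C = C(C_f)` such that
`|f̂_ε(εp)| ≤ C |p| (1+|p|)⁻³` for all `ε ∈ (0,1)` and `p ∈ [−π/ε, π/ε]²`. -/
theorem dft_combined_bound (Cf : ℝ) :
    ∃ C : ℝ, ∀ f : ℝ × ℝ → ℝ, ContDiff ℝ (⊤ : ℕ∞) f → HasCompactSupport f →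
      (∫ x : ℝ × ℝ, f x) = 0 →
      ∀ fε : ℝ → (ℤ × ℤ) → ℝ, IsAdmissible f fε Cf →
        ∀ ε ∈ Set.Ioo (0 : ℝ) 1, ∀ p : ℝ × ℝ,
          |p.1| ≤ Real.pi / ε → |p.2| ≤ Real.pi / ε →
          ‖dft (fε ε) (ε * p.1, ε * p.2)‖ ≤
            C * Real.sqrt (p.1 ^ 2 + p.2 ^ 2) / (1 + Real.sqrt (p.1 ^ 2 + p.2 ^ 2)) ^ 3 := by
  set K : ℝ := (2 * Cf + 1) ^ 2 * Cf with hK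
  set C₁ : ℝ := 2 * Cf * K with hC₁
  set C₂ : ℝ := 3 * π ^ 2 * K / 2 with hC₂
  refine ⟨8 * C₁ + 8 * C₂, ?_⟩
  intro f _ _ _ fε hA ε hε p hp1 hp2
  obtain ⟨hε0, hε1⟩ := hε
  have hε' : ε ∈ Set.Ioo (0:ℝ) 1 := ⟨hε0, hε1⟩
  set g : ℤ × ℤ → ℝ := fε ε with hgdef
  have hgfin : (Function.support g).Finite := hA.finite_supp ε hε'
  set F : Finset (ℤ × ℤ) := hgfin.toFinset with hF
  have hgF : ∀ x ∉ F, g x = 0 := by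
    intro x hx
    by_contra hne
    exact hx (hgfin.mem_toFinset.mpr hne)
  have hCf : 0 ≤ Cf := by
    have h0 := hA.grad0 ε hε' 0
    nlinarith [abs_nonneg (fε ε 0), sq_nonneg ε, pow_pos hε0 2]
  have hK0 : 0 ≤ K := by positivity
  have hC₁0 : 0 ≤ C₁ := by positivity
  have hC₂0 : 0 ≤ C₂ := by positivity
  set q : ℝ × ℝ := (ε * p.1, ε * p.2) with hq
  set r : ℝ := Real.sqrt (p.1 ^ 2 + p.2 ^ 2) with hr
  have hr0 : 0 ≤ r := Real.sqrt_nonneg _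
  have hr2 : r ^ 2 = p.1 ^ 2 + p.2 ^ 2 := Real.sq_sqrt (by positivity)
  have hr1p : |p.1| ≤ r := by
    rw [hr, ← Real.sqrt_sq_eq_abs]
    exact Real.sqrt_le_sqrt (by linarith [sq_nonneg p.2])
  have hr2p : |p.2| ≤ r := by
    rw [hr, ← Real.sqrt_sq_eq_abs]
    exact Real.sqrt_le_sqrt (by linarith [sq_nonneg p.1])
  -- cardinality of the support
  set N : ℤ := ⌊Cf * ε⁻¹⌋ with hN
  have hN0 : (0:ℤ) ≤ N := Int.le_floor.mpr (by push_cast; positivity)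
  have hNle : (N : ℝ) ≤ Cf * ε⁻¹ := Int.floor_le _
  have hFsub : F ⊆ Finset.Icc (-N) N ×ˢ Finset.Icc (-N) N := by
    intro x hx
    have hgx : g x ≠ 0 := by simpa using hgfin.mem_toFinset.mp hx
    obtain ⟨h1, h2⟩ := hA.supp ε hε' x hgx
    simp only [Finset.mem_product, Finset.mem_Icc]
    refine ⟨⟨?_, ?_⟩, ?_, ?_⟩
    · rw [neg_le]
      exact Int.le_floor.mpr (by rw [Int.cast_neg]; linarith [neg_abs_le ((x.1:ℝ))])
    · exact Int.le_floor.mpr (le_trans (le_abs_self _) h1)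
    · rw [neg_le]
      exact Int.le_floor.mpr (by rw [Int.cast_neg]; linarith [neg_abs_le ((x.2:ℝ))])
    · exact Int.le_floor.mpr (le_trans (le_abs_self _) h2)
  have hIccCard : ((Finset.Icc (-N) N).card : ℝ) = 2 * (N:ℝ) + 1 := by
    rw [Int.card_Icc]
    rw [show N + 1 - (-N) = 2*N + 1 by ring]
    have h2 : (0:ℤ) ≤ 2*N+1 := by linarith
    have h3 : ((2*N+1).toNat : ℤ) = 2*N+1 := Int.toNat_of_nonneg h2
    exact_mod_cast h3
  have hcard : (F.card : ℝ) ≤ ((2 * Cf + 1) / ε) ^ 2 := by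
    have h1 : (F.card : ℝ) ≤ ((Finset.Icc (-N) N).card : ℝ) * ((Finset.Icc (-N) N).card : ℝ) := by
      have := Finset.card_le_card hFsub
      rw [Finset.card_product] at this
      exact_mod_cast this
    rw [hIccCard] at h1
    have h2 : 2 * (N:ℝ) + 1 ≤ (2 * Cf + 1) / ε := by
      rw [div_eq_mul_inv]
      have hinv : (1:ℝ) ≤ ε⁻¹ := (one_le_inv₀ hε0).mpr hε1.le
      linarith
    have h3 : (0:ℝ) ≤ 2 * (N:ℝ) + 1 := by
      have : (0:ℝ) ≤ (N:ℝ) := by exact_mod_cast hN0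
      linarith
    exact sq_card_aux _ _ _ h1 h2 h3
  have hsumF : ∑ x ∈ F, |g x| ≤ K := by
    have h1 : ∑ x ∈ F, |g x| ≤ (F.card : ℝ) * (Cf * ε ^ 2) := by
      rw [← nsmul_eq_mul]
      exact Finset.sum_le_card_nsmul F _ _ (fun x _ => hA.grad0 ε hε' x)
    have h2 : ((2 * Cf + 1) / ε) ^ 2 * (Cf * ε ^ 2) = K := by
      rw [hK]
      field_simp
    calc ∑ x ∈ F, |g x| ≤ (F.card : ℝ) * (Cf * ε ^ 2) := h1
      _ ≤ ((2 * Cf + 1) / ε) ^ 2 * (Cf * ε ^ 2) :=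
          mul_le_mul_of_nonneg_right hcard (by positivity)
      _ = K := h2
  -- Low-frequency bound
  have hlow : ‖dft g q‖ ≤ C₁ * r := by
    have hsum0 : ∑ x ∈ F, (g x : ℂ) = 0 := by
      have h0 := hA.sum_zero ε hε'
      rw [tsum_eq_sum (s := F) (fun b hb => hgF b hb)] at h0
      rw [← Complex.ofReal_sum, h0, Complex.ofReal_zero]
    have hdft1 : dft g q = ∑ x ∈ F, (g x : ℂ) *
        (Complex.exp (-Complex.I * ((q.1 * x.1 + q.2 * x.2 : ℝ) : ℂ)) - 1) := by
      rw [dft_eq_sum_aux g F hgF q]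
      rw [show (∑ x ∈ F, (g x : ℂ) *
          (Complex.exp (-Complex.I * ((q.1 * x.1 + q.2 * x.2 : ℝ) : ℂ)) - 1))
          = (∑ x ∈ F, (g x : ℂ) * Complex.exp (-Complex.I * ((q.1 * x.1 + q.2 * x.2 : ℝ) : ℂ)))
            - ∑ x ∈ F, (g x : ℂ) by rw [← Finset.sum_sub_distrib]; congr 1; funext x; ring]
      rw [hsum0, sub_zero]
    rw [hdft1]
    refine (norm_sum_le _ _).trans ?_
    have hterm : ∀ x ∈ F, ‖(g x : ℂ) *
        (Complex.exp (-Complex.I * ((q.1 * x.1 + q.2 * x.2 : ℝ) : ℂ)) - 1)‖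
        ≤ |g x| * (2 * Cf * r) := by
      intro x hx
      have hgx : g x ≠ 0 := by simpa using hgfin.mem_toFinset.mp hx
      obtain ⟨hx1, hx2⟩ := hA.supp ε hε' x hgx
      rw [norm_mul, Complex.norm_real, Real.norm_eq_abs]
      refine mul_le_mul_of_nonneg_left ?_ (abs_nonneg _)
      refine (norm_exp_sub_one_le_aux _).trans ?_
      have hq1 : q.1 = ε * p.1 := rfl
      have hq2 : q.2 = ε * p.2 := rfl
      have habs : |q.1 * (x.1:ℝ) + q.2 * (x.2:ℝ)|
          ≤ ε * |p.1| * |(x.1:ℝ)| + ε * |p.2| * |(x.2:ℝ)| := by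
        refine (abs_add_le _ _).trans ?_
        rw [hq1, hq2, abs_mul, abs_mul, abs_mul, abs_mul, abs_of_pos hε0]
      have b1 : ε * |p.1| * |(x.1:ℝ)| ≤ Cf * |p.1| := by
        calc ε * |p.1| * |(x.1:ℝ)| ≤ ε * |p.1| * (Cf * ε⁻¹) :=
              mul_le_mul_of_nonneg_left hx1 (by positivity)
          _ = Cf * |p.1| := by field_simp
      have b2 : ε * |p.2| * |(x.2:ℝ)| ≤ Cf * |p.2| := by
        calc ε * |p.2| * |(x.2:ℝ)| ≤ ε * |p.2| * (Cf * ε⁻¹) :=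
              mul_le_mul_of_nonneg_left hx2 (by positivity)
          _ = Cf * |p.2| := by field_simp
      have c1 : Cf * |p.1| ≤ Cf * r := mul_le_mul_of_nonneg_left hr1p hCf
      have c2 : Cf * |p.2| ≤ Cf * r := mul_le_mul_of_nonneg_left hr2p hCf
      calc |q.1 * (x.1:ℝ) + q.2 * (x.2:ℝ)| ≤ ε * |p.1| * |(x.1:ℝ)| + ε * |p.2| * |(x.2:ℝ)| := habs
        _ ≤ Cf * |p.1| + Cf * |p.2| := by linarith
        _ ≤ 2 * Cf * r := by linarith
    calc ∑ x ∈ F, ‖(g x : ℂ) *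
        (Complex.exp (-Complex.I * ((q.1 * x.1 + q.2 * x.2 : ℝ) : ℂ)) - 1)‖
        ≤ ∑ x ∈ F, |g x| * (2 * Cf * r) := Finset.sum_le_sum hterm
      _ = (∑ x ∈ F, |g x|) * (2 * Cf * r) := by rw [← Finset.sum_mul]
      _ ≤ K * (2 * Cf * r) := mul_le_mul_of_nonneg_right hsumF (by positivity)
      _ = C₁ * r := by rw [hC₁]; ring
  -- High-frequency bound
  have hhigh : ‖dft g q‖ * r ^ 2 ≤ C₂ := by
    have key : ∀ μ : ℤ × ℤ, μ ∈ dirsZ →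
        ‖dft g q‖ * ‖Complex.exp (-Complex.I * ((q.1 * μ.1 + q.2 * μ.2 : ℝ) : ℂ)) - 1‖ ^ 2
        ≤ 3 * K * ε ^ 2 := by
      intro μ hμ
      have kk := dft_sq_diff_aux g hgfin q μ
      set T2 : Finset (ℤ × ℤ) := F ∪ F.image (fun z => z + μ) ∪ F.image (fun z => z + (μ + μ))
        with hT2
      have hT2zero : ∀ x ∉ T2, g (x - μ - μ) - g (x - μ) - g (x - μ) + g x = 0 := by
        intro x hx
        simp only [hT2, Finset.mem_union, Finset.mem_image, not_or, not_exists, not_and] at hx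
        obtain ⟨⟨hxF, hxim1⟩, hxim2⟩ := hx
        have e0 : g x = 0 := hgF x hxF
        have e1 : g (x - μ) = 0 := by
          apply hgF
          intro hmem
          exact hxim1 _ hmem (by simp)
        have e2 : g (x - μ - μ) = 0 := by
          apply hgF
          intro hmem
          exact hxim2 _ hmem (by rw [sub_sub]; simp)
        rw [e0, e1, e2]
        ring
      have hT2card : (T2.card : ℝ) ≤ 3 * (F.card : ℝ) := by
        have h0 := (Finset.card_union_le (F ∪ F.image (fun z => z + μ))
          (F.image (fun z => z + (μ + μ)))).trans
          (add_le_add ((Finset.card_union_le F (F.image (fun z => z + μ))).trans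
            (add_le_add le_rfl (Finset.card_image_le))) (Finset.card_image_le))
        calc (T2.card : ℝ) ≤ ((F.card + F.card + F.card : ℕ) : ℝ) := by exact_mod_cast h0
          _ = 3 * (F.card : ℝ) := by push_cast; ring
      have hbound : ∀ x : ℤ × ℤ, |g (x - μ - μ) - g (x - μ) - g (x - μ) + g x| ≤ Cf * ε ^ 4 := by
        intro x
        have hg2 := hA.grad2 ε hε' (x - μ - μ) μ hμ μ hμ
        have e1 : x - μ - μ + μ + μ = x := by simp [sub_add_cancel]
        have e2 : x - μ - μ + μ = x - μ := by simp [sub_add_cancel]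
        rw [e1, e2] at hg2
        rw [abs_mul, abs_of_pos (by positivity : (0:ℝ) < ε⁻¹ ^ 2), inv_pow,
          inv_mul_le_iff₀ (by positivity : (0:ℝ) < ε ^ 2)] at hg2
        have hval : g (x - μ - μ) - g (x - μ) - g (x - μ) + g x
            = fε ε x - fε ε (x - μ) - fε ε (x - μ) + fε ε (x - μ - μ) := by
          rw [hgdef]; ring
        rw [hval]
        calc |fε ε x - fε ε (x - μ) - fε ε (x - μ) + fε ε (x - μ - μ)|
            ≤ ε ^ 2 * (Cf * ε ^ 2) := hg2
          _ = Cf * ε ^ 4 := by ring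
      have hnorm2 : ‖dft (fun y => g (y - μ - μ) - g (y - μ) - g (y - μ) + g y) q‖
          ≤ 3 * K * ε ^ 2 := by
        refine (norm_dft_le_aux _ T2 hT2zero q).trans ?_
        have h1 : ∑ x ∈ T2, |g (x - μ - μ) - g (x - μ) - g (x - μ) + g x|
            ≤ (T2.card : ℝ) * (Cf * ε ^ 4) := by
          rw [← nsmul_eq_mul]
          exact Finset.sum_le_card_nsmul T2 _ _ (fun x _ => hbound x)
        calc ∑ x ∈ T2, |g (x - μ - μ) - g (x - μ) - g (x - μ) + g x|
            ≤ (T2.card : ℝ) * (Cf * ε ^ 4) := h1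
          _ ≤ 3 * (F.card : ℝ) * (Cf * ε ^ 4) :=
              mul_le_mul_of_nonneg_right hT2card (by positivity)
          _ ≤ 3 * ((2 * Cf + 1) / ε) ^ 2 * (Cf * ε ^ 4) := by
              linarith [mul_le_mul_of_nonneg_right hcard (by positivity : (0:ℝ) ≤ Cf * ε ^ 4)]
          _ = 3 * K * ε ^ 2 := by rw [hK]; field_simp
      calc ‖dft g q‖ * ‖Complex.exp (-Complex.I * ((q.1 * μ.1 + q.2 * μ.2 : ℝ) : ℂ)) - 1‖ ^ 2
          = ‖(Complex.exp (-Complex.I * ((q.1 * μ.1 + q.2 * μ.2 : ℝ) : ℂ)) - 1) ^ 2 * dft g q‖ := by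
            rw [norm_mul, norm_pow]; ring
        _ = ‖dft (fun y => g (y - μ - μ) - g (y - μ) - g (y - μ) + g y) q‖ := by rw [kk]
        _ ≤ 3 * K * ε ^ 2 := hnorm2
    -- choose the dominant direction
    rcases le_total |p.2| |p.1| with hcase | hcase
    · -- μ = (1,0), t = ε * p.1
      have hμ : ((1:ℤ), (0:ℤ)) ∈ dirsZ := by simp [dirsZ]
      have hkey := key ((1:ℤ), (0:ℤ)) hμ
      have ht : q.1 * (((1:ℤ),(0:ℤ)).1 : ℝ) + q.2 * (((1:ℤ),(0:ℤ)).2 : ℝ) = ε * p.1 := by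
        norm_num [hq]
      rw [ht] at hkey
      have htle : |ε * p.1| ≤ π := by
        rw [abs_mul, abs_of_pos hε0]
        calc ε * |p.1| ≤ ε * (π / ε) := mul_le_mul_of_nonneg_left hp1 hε0.le
          _ = π := by field_simp
      have hge := norm_exp_sub_one_ge_aux (ε * p.1) htle
      have hπ := Real.pi_pos
      have hnn : (0:ℝ) ≤ ‖dft g q‖ := norm_nonneg _
      have hsq : (2 / π * |ε * p.1|) ^ 2
          ≤ ‖Complex.exp (-Complex.I * ((ε * p.1 : ℝ) : ℂ)) - 1‖ ^ 2 := by
        apply pow_le_pow_left₀ (by positivity) hge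
      have h6 : ‖dft g q‖ * (2 / π * |ε * p.1|) ^ 2 ≤ 3 * K * ε ^ 2 :=
        le_trans (mul_le_mul_of_nonneg_left hsq hnn) hkey
      have h7 : (2 / π * |ε * p.1|) ^ 2 = 4 / π ^ 2 * ε ^ 2 * p.1 ^ 2 := by
        rw [mul_pow, abs_mul, mul_pow, sq_abs, sq_abs]
        field_simp
        ring
      rw [h7] at h6
      have h22 : p.2 ^ 2 ≤ p.1 ^ 2 := by
        rw [← sq_abs p.1, ← sq_abs p.2]
        exact pow_le_pow_left₀ (abs_nonneg _) hcase 2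
      have h8 : r ^ 2 ≤ 2 * p.1 ^ 2 := by
        rw [hr2]
        linarith
      exact high_arith_aux _ K ε (p.1 ^ 2) (r ^ 2) C₂ π hnn hπ hε0 h6 h8 hC₂
    · -- μ = (0,1), t = ε * p.2
      have hμ : ((0:ℤ), (1:ℤ)) ∈ dirsZ := by simp [dirsZ]
      have hkey := key ((0:ℤ), (1:ℤ)) hμ
      have ht : q.1 * (((0:ℤ),(1:ℤ)).1 : ℝ) + q.2 * (((0:ℤ),(1:ℤ)).2 : ℝ) = ε * p.2 := by
        norm_num [hq]
      rw [ht] at hkey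
      have htle : |ε * p.2| ≤ π := by
        rw [abs_mul, abs_of_pos hε0]
        calc ε * |p.2| ≤ ε * (π / ε) := mul_le_mul_of_nonneg_left hp2 hε0.le
          _ = π := by field_simp
      have hge := norm_exp_sub_one_ge_aux (ε * p.2) htle
      have hπ := Real.pi_pos
      have hnn : (0:ℝ) ≤ ‖dft g q‖ := norm_nonneg _
      have hsq : (2 / π * |ε * p.2|) ^ 2
          ≤ ‖Complex.exp (-Complex.I * ((ε * p.2 : ℝ) : ℂ)) - 1‖ ^ 2 := by
        apply pow_le_pow_left₀ (by positivity) hge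
      have h6 : ‖dft g q‖ * (2 / π * |ε * p.2|) ^ 2 ≤ 3 * K * ε ^ 2 :=
        le_trans (mul_le_mul_of_nonneg_left hsq hnn) hkey
      have h7 : (2 / π * |ε * p.2|) ^ 2 = 4 / π ^ 2 * ε ^ 2 * p.2 ^ 2 := by
        rw [mul_pow, abs_mul, mul_pow, sq_abs, sq_abs]
        field_simp
        ring
      rw [h7] at h6
      have h22 : p.1 ^ 2 ≤ p.2 ^ 2 := by
        rw [← sq_abs p.1, ← sq_abs p.2]
        exact pow_le_pow_left₀ (abs_nonneg _) hcase 2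
      have h8 : r ^ 2 ≤ 2 * p.2 ^ 2 := by
        rw [hr2]
        linarith
      exact high_arith_aux _ K ε (p.2 ^ 2) (r ^ 2) C₂ π hnn hπ hε0 h6 h8 hC₂
  -- Combine
  have h1r : (0:ℝ) < (1 + r) ^ 3 := by positivity
  rw [le_div_iff₀ h1r]
  have hnn : (0:ℝ) ≤ ‖dft g q‖ := norm_nonneg _
  rcases le_total r 1 with hcase | hcase
  · exact comb_small_aux _ C₁ C₂ r hnn hlow hr0 hcase hC₂0
  · exact comb_large_aux _ C₁ C₂ r hnn hhigh hcase hC₁0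

end
end

section
/- Let Λ be the discrete torus of side L^N, fix 0 ≤ j ≤ N, let E_j ∈ R and u_j ∈ R^Λ, let U_j be a block-additive polymer activity and K_j a component-factorizing polymer activity at scale j, and set Z_j(φ) = e^{−E_j|Λ|} Σ_{X∈P_j} e^{U_j(Λ∖X, φ)} K_j(X, φ). Define Ψ_j = F_Ψ[u_j, U_j, K_j]. Then for every φ ∈ R^Λ: Z_j(φ + u_j) = e^{−E_j|Λ|} Σ_{X∈P_j} e^{U_j(Λ∖X, φ)} Π_{Z∈Comp_j(X)} (K_j + Ψ_j)(Z, φ). -/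
open Finset

noncomputable section

/-- The two-dimensional discrete torus of side length `n`. -/
abbrev Torus (n : ℕ) := ZMod n × ZMod n

/-- Indices of the `j`-blocks of the torus of side `L^N`: pairs `(k₁,k₂)` with
`0 ≤ kᵢ < L^{N−j}`; the corresponding block is `(k₁ L^j, k₂ L^j) + [0,L^j)²`. -/
def blockIndices (L N j : ℕ) : Finset (ℕ × ℕ) :=
  Finset.range (L ^ (N - j)) ×ˢ Finset.range (L ^ (N - j))

/-- Two `j`-blocks are adjacent iff the blocks have ℓ∞-distance at most 1 in the torus,
i.e. iff their indices differ by at most `1` in each coordinate, cyclically mod `M = L^{N−j}`. -/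
def blockAdj (M : ℕ) (a b : ℕ × ℕ) : Prop :=
  (((a.1 : ZMod M) = b.1) ∨ ((a.1 : ZMod M) = (b.1 : ZMod M) + 1) ∨
    ((a.1 : ZMod M) = (b.1 : ZMod M) - 1)) ∧
  (((a.2 : ZMod M) = b.2) ∨ ((a.2 : ZMod M) = (b.2 : ZMod M) + 1) ∨
    ((a.2 : ZMod M) = (b.2 : ZMod M) - 1))

open scoped Classical in
/-- The connected component of the block `a` inside the polymer `X` (a set of block indices),
for the adjacency relation `blockAdj M` restricted to `X`. -/
def compOf (M : ℕ) (X : Finset (ℕ × ℕ)) (a : ℕ × ℕ) : Finset (ℕ × ℕ) :=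
  X.filter fun b => Relation.ReflTransGen (fun v w => v ∈ X ∧ w ∈ X ∧ blockAdj M v w) a b

/-- The set `Comp_j(X)` of connected components of the polymer `X`. -/
def comps (M : ℕ) (X : Finset (ℕ × ℕ)) : Finset (Finset (ℕ × ℕ)) :=
  X.image (compOf M X)

/-- `F_Ψ[u, U, K]` on a connected polymer `X`:
`−K(X,φ) + Σ_{Y⊆X} (e^{U(·,φ+u)} − e^{U(·,φ)})^{X∖Y} K(Y, φ+u)`. -/
def FPsiConn {n : ℕ} (u : Torus n → ℝ)
    (U : (ℕ × ℕ) → (Torus n → ℝ) → ℝ)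
    (K : Finset (ℕ × ℕ) → (Torus n → ℝ) → ℝ)
    (X : Finset (ℕ × ℕ)) (φ : Torus n → ℝ) : ℝ :=
  -K X φ + ∑ Y ∈ X.powerset,
    (∏ B ∈ X \ Y, (Real.exp (U B fun x => φ x + u x) - Real.exp (U B φ))) *
      K Y (fun x => φ x + u x)

/-- `F_Ψ[u, U, K]`, extended multiplicatively over connected components. -/
def FPsi (M : ℕ) {n : ℕ} (u : Torus n → ℝ)
    (U : (ℕ × ℕ) → (Torus n → ℝ) → ℝ)
    (K : Finset (ℕ × ℕ) → (Torus n → ℝ) → ℝ)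
    (Z : Finset (ℕ × ℕ)) (φ : Torus n → ℝ) : ℝ :=
  ∏ X ∈ comps M Z, FPsiConn u U K X φ

namespace Reblock

open scoped Classical

variable {M : ℕ}

lemma blockAdj_symm {a b : ℕ × ℕ} (h : blockAdj M a b) : blockAdj M b a := by
  obtain ⟨h1, h2⟩ := h
  refine ⟨?_, ?_⟩
  · rcases h1 with h | h | h
    · exact Or.inl h.symm
    · exact Or.inr (Or.inr (by rw [h]; ring))
    · exact Or.inr (Or.inl (by rw [h]; ring))
  · rcases h2 with h | h | h
    · exact Or.inl h.symm
    · exact Or.inr (Or.inr (by rw [h]; ring))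
    · exact Or.inr (Or.inl (by rw [h]; ring))

def R (M : ℕ) (X : Finset (ℕ × ℕ)) : ℕ × ℕ → ℕ × ℕ → Prop :=
  Relation.ReflTransGen (fun v w => v ∈ X ∧ w ∈ X ∧ blockAdj M v w)

lemma R_symm {X : Finset (ℕ × ℕ)} {a b : ℕ × ℕ} (h : R M X a b) : R M X b a := by
  refine @Std.Symm.symm _ _ (@Relation.ReflTransGen.stdSymm _ _ ⟨?_⟩) _ _ h
  rintro v w ⟨hv, hw, hadj⟩
  exact ⟨hw, hv, blockAdj_symm hadj⟩

lemma R_mono {X Y : Finset (ℕ × ℕ)} (hXY : X ⊆ Y) {a b : ℕ × ℕ} (h : R M X a b) :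
    R M Y a b :=
  Relation.ReflTransGen.mono (p := fun v w => v ∈ Y ∧ w ∈ Y ∧ blockAdj M v w)
    (fun v w (hvw : v ∈ X ∧ w ∈ X ∧ blockAdj M v w) => ⟨hXY hvw.1, hXY hvw.2.1, hvw.2.2⟩) a b h

lemma mem_compOf {X : Finset (ℕ × ℕ)} {a b : ℕ × ℕ} :
    b ∈ compOf M X a ↔ b ∈ X ∧ R M X a b := by
  unfold compOf R
  exact Finset.mem_filter

lemma compOf_subset {X : Finset (ℕ × ℕ)} {a : ℕ × ℕ} : compOf M X a ⊆ X :=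
  Finset.filter_subset _ _

lemma self_mem_compOf {X : Finset (ℕ × ℕ)} {a : ℕ × ℕ} (ha : a ∈ X) :
    a ∈ compOf M X a :=
  mem_compOf.mpr ⟨ha, Relation.ReflTransGen.refl⟩

lemma compOf_closed {X : Finset (ℕ × ℕ)} {a : ℕ × ℕ} :
    ∀ v ∈ compOf M X a, ∀ w ∈ X, blockAdj M v w → w ∈ compOf M X a := by
  intro v hv w hw hadj
  obtain ⟨hvX, hR⟩ := mem_compOf.mp hv
  exact mem_compOf.mpr ⟨hw, hR.tail ⟨hvX, hw, hadj⟩⟩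

lemma R_confine {X A : Finset (ℕ × ℕ)}
    (hcl : ∀ v ∈ A, ∀ w ∈ X, blockAdj M v w → w ∈ A)
    {a b : ℕ × ℕ} (ha : a ∈ A) (h : R M X a b) : b ∈ A ∧ R M A a b := by
  induction h with
  | refl => exact ⟨ha, Relation.ReflTransGen.refl⟩
  | tail _ step ih =>
      obtain ⟨hc, hR⟩ := ih
      obtain ⟨hv, hw, hadj⟩ := step
      have hb := hcl _ hc _ hw hadj
      exact ⟨hb, hR.tail ⟨hc, hb, hadj⟩⟩

lemma compOf_eq_of_closed {X A : Finset (ℕ × ℕ)} (hAX : A ⊆ X)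
    (hcl : ∀ v ∈ A, ∀ w ∈ X, blockAdj M v w → w ∈ A)
    {a : ℕ × ℕ} (ha : a ∈ A) : compOf M X a = compOf M A a := by
  ext b
  rw [mem_compOf, mem_compOf]
  constructor
  · rintro ⟨_, hR⟩
    obtain ⟨hbA, hRA⟩ := R_confine hcl ha hR
    exact ⟨hbA, hRA⟩
  · rintro ⟨hbA, hRA⟩
    exact ⟨hAX hbA, R_mono hAX hRA⟩

lemma compOf_congr {X : Finset (ℕ × ℕ)} {a b : ℕ × ℕ} (h : R M X a b) :
    compOf M X a = compOf M X b := by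
  ext c
  rw [mem_compOf, mem_compOf]
  exact and_congr_right fun _ => ⟨fun hc => (R_symm h).trans hc, fun hc => h.trans hc⟩

lemma mem_comps {X Z : Finset (ℕ × ℕ)} :
    Z ∈ comps M X ↔ ∃ a ∈ X, compOf M X a = Z := by
  simp [comps]

lemma comps_of_comp {X Z : Finset (ℕ × ℕ)} (hZ : Z ∈ comps M X) :
    comps M Z = {Z} := by
  obtain ⟨a, ha, rfl⟩ := mem_comps.mp hZ
  have key : ∀ b ∈ compOf M X a, compOf M (compOf M X a) b = compOf M X a := by
    intro b hb
    obtain ⟨hbX, hR⟩ := mem_compOf.mp hb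
    rw [← compOf_eq_of_closed compOf_subset compOf_closed hb, ← compOf_congr hR]
  have hne : (compOf M X a).Nonempty := ⟨a, self_mem_compOf ha⟩
  rw [comps, Finset.image_congr (fun b hb => key b hb), Finset.image_const hne]

lemma comps_union {A B : Finset (ℕ × ℕ)} (hd : Disjoint A B)
    (hsep : ∀ a ∈ A, ∀ b ∈ B, ¬ blockAdj M a b) :
    comps M (A ∪ B) = comps M A ∪ comps M B := by
  have hA : ∀ a ∈ A, compOf M (A ∪ B) a = compOf M A a := by
    intro a ha
    refine compOf_eq_of_closed Finset.subset_union_left ?_ ha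
    intro v hv w hw hadj
    rcases Finset.mem_union.1 hw with h | h
    · exact h
    · exact absurd hadj (hsep v hv w h)
  have hB : ∀ b ∈ B, compOf M (A ∪ B) b = compOf M B b := by
    intro b hb
    refine compOf_eq_of_closed Finset.subset_union_right ?_ hb
    intro v hv w hw hadj
    rcases Finset.mem_union.1 hw with h | h
    · exact absurd (blockAdj_symm hadj) (hsep w h v hv)
    · exact h
  rw [comps, Finset.image_union]
  congr 1
  · exact Finset.image_congr (fun x hx => hA x hx)
  · exact Finset.image_congr (fun x hx => hB x hx)

lemma comps_disjoint {A B : Finset (ℕ × ℕ)} (hd : Disjoint A B) :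
    Disjoint (comps M A) (comps M B) := by
  rw [Finset.disjoint_left]
  intro W hWA hWB
  obtain ⟨a, ha, rfl⟩ := mem_comps.mp hWA
  have haA : a ∈ A := ha
  have haW : a ∈ compOf M A a := self_mem_compOf ha
  obtain ⟨b, hb, hEq⟩ := mem_comps.mp hWB
  have : a ∈ B := compOf_subset (hEq ▸ haW)
  exact Finset.disjoint_left.1 hd haA this

end Reblock


namespace Reblock

open scoped Classical

variable {M : ℕ} {n : ℕ}

/-- `G(X) = Σ_{Y⊆X} (e^{U(·,φ+u)} − e^{U(·,φ)})^{X∖Y} K(Y, φ+u)`. -/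
noncomputable def SumG (u : Torus n → ℝ) (U : (ℕ × ℕ) → (Torus n → ℝ) → ℝ)
    (K : Finset (ℕ × ℕ) → (Torus n → ℝ) → ℝ)
    (X : Finset (ℕ × ℕ)) (φ : Torus n → ℝ) : ℝ :=
  ∑ Y ∈ X.powerset,
    (∏ B ∈ X \ Y, (Real.exp (U B fun x => φ x + u x) - Real.exp (U B φ))) *
      K Y (fun x => φ x + u x)

variable {Λ : Finset (ℕ × ℕ)} {K : Finset (ℕ × ℕ) → (Torus n → ℝ) → ℝ}

lemma comps_empty : comps M (∅ : Finset (ℕ × ℕ)) = ∅ := by simp [comps]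

lemma K_mul (hKfact : ∀ X ⊆ Λ, ∀ χ, K X χ = ∏ Z ∈ comps M X, K Z χ)
    {A B : Finset (ℕ × ℕ)} (hAB : A ∪ B ⊆ Λ) (hd : Disjoint A B)
    (hsep : ∀ a ∈ A, ∀ b ∈ B, ¬ blockAdj M a b) (χ : Torus n → ℝ) :
    K (A ∪ B) χ = K A χ * K B χ := by
  rw [hKfact _ hAB χ, comps_union hd hsep, Finset.prod_union (comps_disjoint hd),
    ← hKfact _ (Finset.union_subset_iff.mp hAB).1 χ,
    ← hKfact _ (Finset.union_subset_iff.mp hAB).2 χ]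

lemma SumG_mul (hKfact : ∀ X ⊆ Λ, ∀ χ, K X χ = ∏ Z ∈ comps M X, K Z χ)
    (u : Torus n → ℝ) (U : (ℕ × ℕ) → (Torus n → ℝ) → ℝ)
    {A B : Finset (ℕ × ℕ)} (hAB : A ∪ B ⊆ Λ) (hd : Disjoint A B)
    (hsep : ∀ a ∈ A, ∀ b ∈ B, ¬ blockAdj M a b) (φ : Torus n → ℝ) :
    SumG u U K (A ∪ B) φ = SumG u U K A φ * SumG u U K B φ := by
  unfold SumG
  rw [Finset.sum_mul_sum, ← Finset.sum_product']
  refine (Finset.sum_nbij' (fun Y => (Y ∩ A, Y ∩ B)) (fun p => p.1 ∪ p.2)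
    ?_ ?_ ?_ ?_ ?_)
  · intro Y hY
    simp only [Finset.mem_product, Finset.mem_powerset]
    exact ⟨Finset.inter_subset_right, Finset.inter_subset_right⟩
  · rintro ⟨Y₁, Y₂⟩ hp
    simp only [Finset.mem_product, Finset.mem_powerset] at hp ⊢
    exact Finset.union_subset (hp.1.trans Finset.subset_union_left)
      (hp.2.trans Finset.subset_union_right)
  · intro Y hY
    simp only [Finset.mem_powerset] at hY
    simp only [← Finset.inter_union_distrib_left]
    exact Finset.inter_eq_left.mpr hY
  · rintro ⟨Y₁, Y₂⟩ hp
    simp only [Finset.mem_product, Finset.mem_powerset] at hp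
    obtain ⟨h1, h2⟩ := hp
    have hY₂A : Disjoint Y₂ A := Finset.disjoint_of_subset_left h2 hd.symm
    have hY₁B : Disjoint Y₁ B := Finset.disjoint_of_subset_left h1 hd
    have e1 : (Y₁ ∪ Y₂) ∩ A = Y₁ := by
      rw [Finset.union_inter_distrib_right, Finset.inter_eq_left.mpr h1,
        Finset.disjoint_iff_inter_eq_empty.mp hY₂A, Finset.union_empty]
    have e2 : (Y₁ ∪ Y₂) ∩ B = Y₂ := by
      rw [Finset.union_inter_distrib_right, Finset.inter_eq_left.mpr h2,
        Finset.disjoint_iff_inter_eq_empty.mp hY₁B, Finset.empty_union]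
    simp [e1, e2]
  · intro Y hY
    simp only [Finset.mem_powerset] at hY
    have hYsplit : Y = (Y ∩ A) ∪ (Y ∩ B) := by
      rw [← Finset.inter_union_distrib_left]
      exact (Finset.inter_eq_left.mpr hY).symm
    have hdY : Disjoint (Y ∩ A) (Y ∩ B) :=
      Finset.disjoint_of_subset_left Finset.inter_subset_right
        (Finset.disjoint_of_subset_right Finset.inter_subset_right hd)
    have hsepY : ∀ a ∈ Y ∩ A, ∀ b ∈ Y ∩ B, ¬ blockAdj M a b := fun a ha b hb =>
      hsep a (Finset.mem_inter.1 ha).2 b (Finset.mem_inter.1 hb).2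
    have hK : K Y (fun x => φ x + u x)
        = K (Y ∩ A) (fun x => φ x + u x) * K (Y ∩ B) (fun x => φ x + u x) := by
      nth_rewrite 1 [hYsplit]
      exact K_mul hKfact (by rw [← hYsplit]; exact hY.trans hAB) hdY hsepY _
    have hsd : (A ∪ B) \ Y = (A \ (Y ∩ A)) ∪ (B \ (Y ∩ B)) := by
      ext x
      simp only [Finset.mem_sdiff, Finset.mem_union, Finset.mem_inter, not_and]
      have hx : x ∈ A → x ∉ B := fun h => Finset.disjoint_left.1 hd h
      tauto
    have hdsd : Disjoint (A \ (Y ∩ A)) (B \ (Y ∩ B)) :=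
      Finset.disjoint_of_subset_left Finset.sdiff_subset
        (Finset.disjoint_of_subset_right Finset.sdiff_subset hd)
    rw [hsd, Finset.prod_union hdsd, hK]
    ring

end Reblock

namespace Reblock

open scoped Classical

variable {M : ℕ} {n : ℕ} {Λ : Finset (ℕ × ℕ)} {K : Finset (ℕ × ℕ) → (Torus n → ℝ) → ℝ}

lemma K_empty (hKfact : ∀ X ⊆ Λ, ∀ χ, K X χ = ∏ Z ∈ comps M X, K Z χ)
    (χ : Torus n → ℝ) : K ∅ χ = 1 := by
  rw [hKfact ∅ (Finset.empty_subset _) χ, comps_empty, Finset.prod_empty]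

lemma SumG_comps (hKfact : ∀ X ⊆ Λ, ∀ χ, K X χ = ∏ Z ∈ comps M X, K Z χ)
    (u : Torus n → ℝ) (U : (ℕ × ℕ) → (Torus n → ℝ) → ℝ) (φ : Torus n → ℝ) :
    ∀ X, X ⊆ Λ → SumG u U K X φ = ∏ Z ∈ comps M X, SumG u U K Z φ := by
  intro X
  induction X using Finset.strongInduction with
  | _ X ih =>
    intro hXΛ
    rcases X.eq_empty_or_nonempty with rfl | ⟨a, ha⟩
    · simp [SumG, comps_empty, K_empty (M := M) hKfact]
    · set Z := compOf M X a with hZdef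
      have hZX : Z ⊆ X := compOf_subset
      have haZ : a ∈ Z := self_mem_compOf ha
      have hZmem : Z ∈ comps M X := Finset.mem_image_of_mem _ ha
      set X' := X \ Z with hX'def
      have hun : Z ∪ X' = X := Finset.union_sdiff_of_subset hZX
      have hdisj : Disjoint Z X' := Finset.disjoint_sdiff
      have hsep : ∀ v ∈ Z, ∀ w ∈ X', ¬ blockAdj M v w := by
        intro v hv w hw hadj
        exact (Finset.mem_sdiff.1 hw).2 (compOf_closed v hv w (Finset.mem_sdiff.1 hw).1 hadj)
      have hssub : X' ⊂ X := Finset.sdiff_ssubset hZX ⟨a, haZ⟩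
      have hX'Λ : X' ⊆ Λ := Finset.sdiff_subset.trans hXΛ
      have hcomps : comps M X = insert Z (comps M X') := by
        conv_lhs => rw [← hun]
        rw [comps_union hdisj hsep, comps_of_comp hZmem, ← Finset.insert_eq]
      have hZnot : Z ∉ comps M X' := by
        intro hmem
        obtain ⟨b, hb, hEq⟩ := mem_comps.mp hmem
        have hZX' : Z ⊆ X' := hEq ▸ compOf_subset
        have : a ∈ X \ Z := hX'def ▸ hZX' haZ
        exact (Finset.mem_sdiff.1 this).2 haZ
      calc SumG u U K X φ = SumG u U K (Z ∪ X') φ := by rw [hun]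
        _ = SumG u U K Z φ * SumG u U K X' φ :=
            SumG_mul hKfact u U (by rw [hun]; exact hXΛ) hdisj hsep φ
        _ = SumG u U K Z φ * ∏ W ∈ comps M X', SumG u U K W φ := by
            rw [ih X' hssub hX'Λ]
        _ = ∏ W ∈ comps M X, SumG u U K W φ := by
            rw [hcomps, Finset.prod_insert hZnot]

lemma inner_sum (Λ Y : Finset (ℕ × ℕ)) (hY : Y ⊆ Λ) (f g : (ℕ × ℕ) → ℝ) :
    ∑ X ∈ Λ.powerset.filter (fun X => Y ⊆ X),
      (∏ b ∈ Λ \ X, g b) * (∏ B ∈ X \ Y, (f B - g B))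
    = ∏ b ∈ Λ \ Y, f b := by
  have hrw : ∏ b ∈ Λ \ Y, f b
      = ∑ t ∈ (Λ \ Y).powerset, (∏ B ∈ t, (f B - g B)) * ∏ b ∈ (Λ \ Y) \ t, g b := by
    rw [← Finset.prod_add]
    exact Finset.prod_congr rfl fun b _ => by ring
  rw [hrw]
  refine Finset.sum_nbij' (fun X => X \ Y) (fun t => Y ∪ t) ?_ ?_ ?_ ?_ ?_
  · intro X hX
    simp only [Finset.mem_filter, Finset.mem_powerset] at hX
    exact Finset.mem_powerset.2 (Finset.sdiff_subset_sdiff hX.1 (le_refl Y))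
  · intro t ht
    simp only [Finset.mem_powerset] at ht
    simp only [Finset.mem_filter, Finset.mem_powerset]
    exact ⟨Finset.union_subset hY (ht.trans Finset.sdiff_subset), Finset.subset_union_left⟩
  · intro X hX
    simp only [Finset.mem_filter, Finset.mem_powerset] at hX
    exact Finset.union_sdiff_of_subset hX.2
  · intro t ht
    simp only [Finset.mem_powerset] at ht
    exact Finset.union_sdiff_cancel_left
      (Finset.disjoint_of_subset_right ht Finset.disjoint_sdiff)
  · intro X hX
    simp only [Finset.mem_filter, Finset.mem_powerset] at hX
    have hsd : (Λ \ Y) \ (X \ Y) = Λ \ X := by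
      ext x
      simp only [Finset.mem_sdiff]
      have h1 : x ∈ Y → x ∈ X := fun h => hX.2 h
      tauto
    rw [hsd]
    ring

end Reblock

/-- **Reblocking of the external field** (Proposition 4.2): if
`Z_j(φ) = e^{−E_j|Λ|} Σ_{X∈P_j} e^{U_j(Λ∖X,φ)} K_j(X,φ)` with `U_j` additive over blocks and
`K_j` factorizing over connected components, then with `Ψ_j = F_Ψ[u_j,U_j,K_j]`,
`Z_j(φ+u_j) = e^{−E_j|Λ|} Σ_{X∈P_j} e^{U_j(Λ∖X,φ)} Π_{Z∈Comp_j(X)} (K_j+Ψ_j)(Z,φ)`. -/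

theorem reblocking_external_field
    (L N j : ℕ) (hL : 1 < L) (hj : j ≤ N)
    (E : ℝ) (u : Torus (L ^ N) → ℝ)
    (U : (ℕ × ℕ) → (Torus (L ^ N) → ℝ) → ℝ)
    (K : Finset (ℕ × ℕ) → (Torus (L ^ N) → ℝ) → ℝ)
    (hKempty : ∀ φ, K ∅ φ = 1)
    (hKfact : ∀ X ∈ (blockIndices L N j).powerset, ∀ φ,
      K X φ = ∏ Z ∈ comps (L ^ (N - j)) X, K Z φ)
    (φ : Torus (L ^ N) → ℝ) :
    Real.exp (-E * ((L : ℝ) ^ N) ^ 2) *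
      ∑ X ∈ (blockIndices L N j).powerset,
        Real.exp (∑ b ∈ blockIndices L N j \ X, U b fun x => φ x + u x) *
          K X (fun x => φ x + u x)
    = Real.exp (-E * ((L : ℝ) ^ N) ^ 2) *
      ∑ X ∈ (blockIndices L N j).powerset,
        Real.exp (∑ b ∈ blockIndices L N j \ X, U b φ) *
          ∏ Z ∈ comps (L ^ (N - j)) X,
            (K Z φ + FPsi (L ^ (N - j)) u U K Z φ) := by
  classical
  congr 1
  set Λ := blockIndices L N j with hΛ
  set M := L ^ (N - j) with hM
  have hKfact' : ∀ X ⊆ Λ, ∀ χ, K X χ = ∏ Z ∈ comps M X, K Z χ :=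
    fun X hX χ => hKfact X (Finset.mem_powerset.2 hX) χ
  symm
  calc
    ∑ X ∈ Λ.powerset, Real.exp (∑ b ∈ Λ \ X, U b φ) *
        ∏ Z ∈ comps M X, (K Z φ + FPsi M u U K Z φ)
      = ∑ X ∈ Λ.powerset, Real.exp (∑ b ∈ Λ \ X, U b φ) * Reblock.SumG u U K X φ := by
        refine Finset.sum_congr rfl fun X hX => ?_
        congr 1
        refine (Finset.prod_congr rfl fun Z hZ => ?_).trans
          (Reblock.SumG_comps hKfact' u U φ X (Finset.mem_powerset.1 hX)).symm
        rw [FPsi, Reblock.comps_of_comp hZ, Finset.prod_singleton]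
        simp only [FPsiConn, Reblock.SumG]
        ring
    _ = ∑ X ∈ Λ.powerset, ∑ Y ∈ X.powerset,
          Real.exp (∑ b ∈ Λ \ X, U b φ) *
            ((∏ B ∈ X \ Y, (Real.exp (U B fun x => φ x + u x) - Real.exp (U B φ))) *
              K Y (fun x => φ x + u x)) := by
        refine Finset.sum_congr rfl fun X hX => ?_
        simp only [Reblock.SumG, Finset.mul_sum]
    _ = ∑ Y ∈ Λ.powerset, ∑ X ∈ Λ.powerset.filter (fun X => Y ⊆ X),
          Real.exp (∑ b ∈ Λ \ X, U b φ) *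
            ((∏ B ∈ X \ Y, (Real.exp (U B fun x => φ x + u x) - Real.exp (U B φ))) *
              K Y (fun x => φ x + u x)) := by
        refine Finset.sum_comm' ?_
        intro X Y
        simp only [Finset.mem_powerset, Finset.mem_filter]
        constructor
        · rintro ⟨h1, h2⟩; exact ⟨⟨h1, h2⟩, h2.trans h1⟩
        · rintro ⟨⟨h1, h2⟩, _⟩; exact ⟨h1, h2⟩
    _ = ∑ Y ∈ Λ.powerset,
          Real.exp (∑ b ∈ Λ \ Y, U b fun x => φ x + u x) * K Y (fun x => φ x + u x) := by
        refine Finset.sum_congr rfl fun Y hY => ?_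
        rw [Finset.mem_powerset] at hY
        have hterm : ∀ X ∈ Λ.powerset.filter (fun X => Y ⊆ X),
            Real.exp (∑ b ∈ Λ \ X, U b φ) *
              ((∏ B ∈ X \ Y, (Real.exp (U B fun x => φ x + u x) - Real.exp (U B φ))) *
                K Y (fun x => φ x + u x))
            = ((∏ b ∈ Λ \ X, Real.exp (U b φ)) *
                (∏ B ∈ X \ Y, (Real.exp (U B fun x => φ x + u x) - Real.exp (U B φ)))) *
                  K Y (fun x => φ x + u x) := by
          intro X _
          rw [Real.exp_sum]
          ring
        rw [Finset.sum_congr rfl hterm, ← Finset.sum_mul,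
          Reblock.inner_sum Λ Y hY (fun b => Real.exp (U b fun x => φ x + u x))
            (fun b => Real.exp (U b φ)), ← Real.exp_sum]

end
end

section
/- There exists a constant C > 0 with the following property. For all integers L ≥ 2 and j ≥ 0, every translate B = a + ([0, L^j) ∩ Z)^2 (a ∈ Z^2) and its enlargement B^* = {x ∈ Z^2 : ℓ^∞-dist(x, B) ≤ 2 L^j}, and every φ: Z^2 → R: max_{x∈B^*} |∇_j φ(x)|^2 ≤ 2 L^{−2j} Σ_{x∈B} |∇_j φ(x)|^2 + C max_{x∈B^*} |∇_j^2 φ(x)|^2. -/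
open Finset

noncomputable section

lemma dirsZ_nonempty : dirsZ.Nonempty := ⟨(1, 0), by decide⟩

/-- `|∇_j φ(x)|`: the maximum over directions `μ` of `|L^j ∇^μ φ(x)|`. -/
def grad1 (L j : ℕ) (φ : ℤ × ℤ → ℝ) (x : ℤ × ℤ) : ℝ :=
  dirsZ.sup' dirsZ_nonempty fun μ => |(L : ℝ) ^ j * (φ (x + μ) - φ x)|

/-- `|∇²_j φ(x)|`: the maximum over pairs of directions `μ, ν` of `|L^{2j} ∇^μ ∇^ν φ(x)|`. -/
def grad2 (L j : ℕ) (φ : ℤ × ℤ → ℝ) (x : ℤ × ℤ) : ℝ :=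
  (dirsZ ×ˢ dirsZ).sup' (dirsZ_nonempty.product dirsZ_nonempty) fun μν =>
    |(L : ℝ) ^ (2 * j) *
      (φ (x + μν.1 + μν.2) - φ (x + μν.2) - φ (x + μν.1) + φ x)|

/-- The block `B = a + ([0, L^j) ∩ ℤ)²`. -/
def block (L j : ℕ) (a : ℤ × ℤ) : Finset (ℤ × ℤ) :=
  Finset.Ico a.1 (a.1 + (L : ℤ) ^ j) ×ˢ Finset.Ico a.2 (a.2 + (L : ℤ) ^ j)

/-- The enlarged block `B* = {x : ℓ∞-dist(x,B) ≤ 2L^j}`. -/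
def blockStar (L j : ℕ) (a : ℤ × ℤ) : Finset (ℤ × ℤ) :=
  Finset.Ico (a.1 - 2 * (L : ℤ) ^ j) (a.1 + 3 * (L : ℤ) ^ j) ×ˢ
    Finset.Ico (a.2 - 2 * (L : ℤ) ^ j) (a.2 + 3 * (L : ℤ) ^ j)

lemma le_grad1 (L j : ℕ) (φ : ℤ × ℤ → ℝ) (x μ : ℤ × ℤ) (hμ : μ ∈ dirsZ) :
    |(L : ℝ) ^ j * (φ (x + μ) - φ x)| ≤ grad1 L j φ x := by
  rw [grad1]; exact Finset.le_sup' (fun μ => |(L : ℝ) ^ j * (φ (x + μ) - φ x)|) hμ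

lemma le_grad2 (L j : ℕ) (φ : ℤ × ℤ → ℝ) (x μ ν : ℤ × ℤ) (hμ : μ ∈ dirsZ) (hν : ν ∈ dirsZ) :
    |(L : ℝ) ^ (2 * j) * (φ (x + μ + ν) - φ (x + ν) - φ (x + μ) + φ x)| ≤ grad2 L j φ x := by
  rw [grad2]
  exact Finset.le_sup' (f := fun μν : (ℤ×ℤ)×(ℤ×ℤ) =>
      |(L : ℝ) ^ (2 * j) * (φ (x + μν.1 + μν.2) - φ (x + μν.2) - φ (x + μν.1) + φ x)|)
    (Finset.mem_product.2 ⟨hμ, hν⟩) (b := (μ, ν))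

lemma grad1_nonneg (L j : ℕ) (φ : ℤ × ℤ → ℝ) (x : ℤ × ℤ) : 0 ≤ grad1 L j φ x :=
  le_trans (abs_nonneg _) (le_grad1 L j φ x (1,0) (by decide))

lemma grad2_nonneg (L j : ℕ) (φ : ℤ × ℤ → ℝ) (x : ℤ × ℤ) : 0 ≤ grad2 L j φ x :=
  le_trans (abs_nonneg _) (le_grad2 L j φ x (1,0) (1,0) (by decide) (by decide))

lemma grad1_step (L j : ℕ) (hL : 1 ≤ L) (φ : ℤ × ℤ → ℝ) (x ν : ℤ × ℤ) (hν : ν ∈ dirsZ) :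
    grad1 L j φ x ≤ grad1 L j φ (x + ν) + grad2 L j φ x / (L : ℝ) ^ j := by
  have hLpos : (0:ℝ) < (L:ℝ)^j := by positivity
  rw [grad1, Finset.sup'_le_iff]
  intro μ hμ
  have h1 : |(L : ℝ) ^ j * (φ (x + ν + μ) - φ (x + ν))| ≤ grad1 L j φ (x + ν) :=
    le_grad1 L j φ (x+ν) μ hμ
  have h2 : |(L : ℝ) ^ (2*j) * (φ (x + ν + μ) - φ (x + μ) - φ (x + ν) + φ x)| ≤ grad2 L j φ x :=
    le_grad2 L j φ x ν μ hν hμ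
  set d : ℝ := φ (x + ν + μ) - φ (x + μ) - φ (x + ν) + φ x with hd
  have h5 : |(L:ℝ)^(2*j) * d| = (L:ℝ)^j * |(L:ℝ)^j * d| := by
    rw [two_mul, pow_add, mul_assoc, abs_mul, abs_of_nonneg (le_of_lt hLpos)]
  have h6 : |(L:ℝ)^j * d| ≤ grad2 L j φ x / (L:ℝ)^j := by
    rw [le_div_iff₀ hLpos]
    calc |(L:ℝ)^j * d| * (L:ℝ)^j = (L:ℝ)^j * |(L:ℝ)^j * d| := by ring
    _ = |(L:ℝ)^(2*j) * d| := h5.symm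
    _ ≤ grad2 L j φ x := h2
  have tri : |(L:ℝ)^j * (φ (x + μ) - φ x)| ≤
      |(L : ℝ) ^ j * (φ (x + ν + μ) - φ (x + ν))| + |(L:ℝ)^j * d| := by
    have he : (L:ℝ)^j * (φ (x + μ) - φ x) =
        (L : ℝ) ^ j * (φ (x + ν + μ) - φ (x + ν)) - (L:ℝ)^j * d := by rw [hd]; ring
    rw [he, sub_eq_add_neg]
    exact (abs_add_le _ _).trans (by rw [abs_neg])
  linarith

lemma path_bound (L j : ℕ) (hL : 1 ≤ L) (φ : ℤ × ℤ → ℝ) (a : ℤ × ℤ) (c : ℝ) (hc0 : 0 ≤ c)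
    (hc : ∀ z ∈ blockStar L j a, grad2 L j φ z ≤ c) :
    ∀ n : ℕ, ∀ x ∈ blockStar L j a, ∀ y ∈ blockStar L j a,
      (x.1 - y.1).natAbs + (x.2 - y.2).natAbs ≤ n →
      grad1 L j φ x ≤ grad1 L j φ y + n * (c / (L : ℝ) ^ j) := by
  have hLpos : (0:ℝ) < (L:ℝ)^j := by positivity
  have hcL : 0 ≤ c / (L:ℝ)^j := div_nonneg hc0 (le_of_lt hLpos)
  intro n
  induction n with
  | zero =>
    intro x hx y hy h
    have hxy : x = y := by
      have h1 : x.1 = y.1 ∧ x.2 = y.2 := by omega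
      exact Prod.ext h1.1 h1.2
    simp [hxy]
  | succ n ih =>
    intro x hx y hy h
    by_cases hxy : x = y
    · subst hxy
      have : (0:ℝ) ≤ (n+1 : ℕ) * (c / (L:ℝ)^j) := by positivity
      linarith
    · have hstep : ∀ ν ∈ dirsZ, x + ν ∈ blockStar L j a →
          (((x+ν).1 - y.1).natAbs + ((x+ν).2 - y.2).natAbs ≤ n) →
          grad1 L j φ x ≤ grad1 L j φ y + (n+1 : ℕ) * (c / (L : ℝ) ^ j) := by
        intro ν hν hmem hdist
        have h1 := grad1_step L j hL φ x ν hν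
        have h2 := ih (x + ν) hmem y hy hdist
        have h3 : grad2 L j φ x / (L:ℝ)^j ≤ c / (L:ℝ)^j := by
          gcongr
          exact hc x hx
        push_cast
        push_cast at h2
        linarith
      simp only [blockStar, Finset.mem_product, Finset.mem_Ico] at hx hy
      rcases lt_trichotomy x.1 y.1 with h1 | h1 | h1
      · refine hstep (1,0) (by decide) ?_ ?_
        · simp only [blockStar, Finset.mem_product, Finset.mem_Ico, Prod.fst_add, Prod.snd_add]
          omega
        · simp only [Prod.fst_add, Prod.snd_add]; omega
      · rcases lt_trichotomy x.2 y.2 with h2 | h2 | h2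
        · refine hstep (0,1) (by decide) ?_ ?_
          · simp only [blockStar, Finset.mem_product, Finset.mem_Ico, Prod.fst_add, Prod.snd_add]
            omega
          · simp only [Prod.fst_add, Prod.snd_add]; omega
        · exact absurd (Prod.ext h1 h2) hxy
        · refine hstep (0,-1) (by decide) ?_ ?_
          · simp only [blockStar, Finset.mem_product, Finset.mem_Ico, Prod.fst_add, Prod.snd_add]
            omega
          · simp only [Prod.fst_add, Prod.snd_add]; omega
      · refine hstep (-1,0) (by decide) ?_ ?_
        · simp only [blockStar, Finset.mem_product, Finset.mem_Ico, Prod.fst_add, Prod.snd_add]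
          omega
        · simp only [Prod.fst_add, Prod.snd_add]; omega

/-- **Discrete interpolation inequality**: there is a universal `C > 0` such that for every
`L ≥ 2`, scale `j`, block `B` with enlargement `B*`, and field `φ : ℤ² → ℝ`,
`max_{x∈B*} |∇_j φ(x)|² ≤ 2 L^{−2j} Σ_{x∈B} |∇_j φ(x)|² + C max_{x∈B*} |∇²_j φ(x)|²`
(the max on the right encoded by an arbitrary upper bound `M`). -/
theorem discrete_gradient_interpolation :
    ∃ C > (0 : ℝ), ∀ L : ℕ, 2 ≤ L → ∀ j : ℕ, ∀ a : ℤ × ℤ, ∀ φ : ℤ × ℤ → ℝ,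
      ∀ M : ℝ, (∀ y ∈ blockStar L j a, grad2 L j φ y ^ 2 ≤ M) →
        ∀ x ∈ blockStar L j a,
          grad1 L j φ x ^ 2 ≤
            2 * (((L : ℝ) ^ (2 * j))⁻¹ * ∑ y ∈ block L j a, grad1 L j φ y ^ 2) + C * M := by
  refine ⟨72, by norm_num, ?_⟩
  intro L hL j a φ M hM x hx
  have hL1 : 1 ≤ L := by omega
  have hM0 : 0 ≤ M := le_trans (sq_nonneg _) (hM x hx)
  set c := Real.sqrt M with hcdef
  have hc0 : 0 ≤ c := Real.sqrt_nonneg M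
  have hcM : c ^ 2 = M := Real.sq_sqrt hM0
  have hgc : ∀ z ∈ blockStar L j a, grad2 L j φ z ≤ c := by
    intro z hz
    nlinarith [hM z hz, grad2_nonneg L j φ z, hc0, hcM]
  have hLpos : (0:ℝ) < (L:ℝ)^j := by positivity
  have hLne : ((L:ℝ))^j ≠ 0 := ne_of_gt hLpos
  have hcast : ((L:ℤ))^j = ((L^j : ℕ) : ℤ) := by push_cast; ring
  -- pointwise comparison
  have key : ∀ y ∈ block L j a, grad1 L j φ x ^ 2 ≤ 2 * grad1 L j φ y ^ 2 + 72 * M := by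
    intro y hy
    have hyS : y ∈ blockStar L j a := by
      have hn0 : (0:ℤ) ≤ (L:ℤ)^j := by positivity
      simp only [block, blockStar, Finset.mem_product, Finset.mem_Ico] at hy ⊢
      omega
    have hdist : (x.1 - y.1).natAbs + (x.2 - y.2).natAbs ≤ 6 * L ^ j := by
      have hx' := hx
      simp only [block, blockStar, Finset.mem_product, Finset.mem_Ico, hcast] at hy hx'
      omega
    have hpath := path_bound L j hL1 φ a c hc0 hgc (6 * L ^ j) x hx y hyS hdist
    have hsimp : ((6 * L ^ j : ℕ) : ℝ) * (c / (L:ℝ)^j) = 6 * c := by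
      push_cast
      field_simp
    rw [hsimp] at hpath
    nlinarith [grad1_nonneg L j φ x, grad1_nonneg L j φ y, sq_nonneg (grad1 L j φ y - 6*c), hcM, hc0]
  -- cardinality of the block
  have htoNat : ((L:ℤ)^j).toNat = L ^ j := by
    rw [hcast, Int.toNat_natCast]
  have hcard : (block L j a).card = L ^ (2*j) := by
    rw [block, Finset.card_product, Int.card_Ico, Int.card_Ico,
      add_sub_cancel_left, add_sub_cancel_left, htoNat, two_mul, pow_add]
  -- summation
  set S := ∑ y ∈ block L j a, grad1 L j φ y ^ 2 with hSdef
  have hsum : (L ^ (2*j) : ℝ) * grad1 L j φ x ^ 2 ≤ 2 * S + (L ^ (2*j) : ℝ) * (72 * M) := by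
    have h1 : ∑ _y ∈ block L j a, grad1 L j φ x ^ 2
        ≤ ∑ y ∈ block L j a, (2 * grad1 L j φ y ^ 2 + 72 * M) := Finset.sum_le_sum key
    rw [Finset.sum_const, Finset.sum_add_distrib, Finset.sum_const, ← Finset.mul_sum,
      hcard, nsmul_eq_mul, nsmul_eq_mul] at h1
    push_cast at h1 ⊢
    linarith
  have hP : (0:ℝ) < (L:ℝ)^(2*j) := by positivity
  have h3 : grad1 L j φ x ^ 2 ≤ (2 * S + (L:ℝ)^(2*j) * (72 * M)) / (L:ℝ)^(2*j) := by
    rw [le_div_iff₀ hP]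
    push_cast at hsum
    linarith
  have h4 : (2 * S + (L:ℝ)^(2*j) * (72 * M)) / (L:ℝ)^(2*j)
      = 2 * (((L:ℝ)^(2*j))⁻¹ * S) + 72 * M := by
    field_simp
  linarith


end
end
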